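/- arXiv:1207.6674 — 4 statements merged into one kernel-verified Lean document; each statement's English description precedes it below -/
import Mathlib

section
/- There exists a convergent partition sequence {𝒯_k} of T such that 𝒞_k ⊆ 𝒯_k for all positive integers k; that is, each 𝒯_k is a finite family of pairwise disjoint compact subsets of T whose union is T, 𝒯_{k+1} refines 𝒯_k, max_{A∈𝒯_k} diam A → 0 as k → ∞, and every set C_i^k with |i| + j = k belongs to 𝒯_k. -/
noncomputable section

open Set Metric MeasureTheory

/-- Distance between two sets. -/
def setDist {X : Type*} [MetricSpace X] (A B : Set X) : ℝ := sInf (Set.image2 dist A B)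

/-- Lipschitz equivalence of two sets: a bi-Lipschitz bijection between them. -/
def LipEquivOn {X Y : Type*} [MetricSpace X] [MetricSpace Y] (E : Set X) (F : Set Y) : Prop :=
  ∃ (f : X → Y) (c c' : ℝ), 0 < c ∧ c ≤ c' ∧ Set.BijOn f E F ∧
    ∀ x ∈ E, ∀ y ∈ E, c * dist x y ≤ dist (f x) (f y) ∧ dist (f x) (f y) ≤ c' * dist x y

/-- The affine contraction `x ↦ ρ i * x + t i`. -/
def affMap (r t : ℕ → ℝ) (i : ℕ) (x : ℝ) : ℝ := r i * x + t i

/-- Composition of the affine maps along a word (first letter outermost). -/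
def affWord (r t : ℕ → ℝ) : List ℕ → ℝ → ℝ
  | [] => id
  | i :: w => affMap r t i ∘ affWord r t w

/-- Cylinder of a general IFS for a word over `Fin n`. -/
def cylW {X : Type*} {n : ℕ} (Ψ : Fin n → X → X) (F : Set X) (w : List (Fin n)) : Set X :=
  (w.foldr (fun i g => Ψ i ∘ g) id) '' F

/-- A (separable) contraction vector `(ρ 0, …, ρ (n-1))` in `ℝ`. -/
structure ContractionVec (n : ℕ) (ρ : ℕ → ℝ) : Prop where
  three_le : 3 ≤ n
  pos : ∀ i, i < n → 0 < ρ i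
  lt_one : ∀ i, i < n → ρ i < 1
  sum_lt : (∑ i ∈ Finset.range n, ρ i) < 1

/-- The touching IFS of the standing setup, together with its attractor `T`. -/
structure TouchingIFS (n : ℕ) (ρ : ℕ → ℝ) where
  t : ℕ → ℝ
  T : Set ℝ
  order : ∀ i, i + 1 < n → affMap ρ t i 1 ≤ affMap ρ t (i + 1) 0
  left0 : affMap ρ t 0 0 = 0
  right1 : affMap ρ t (n - 1) 1 = 1
  touch_ex : ∃ i, i + 1 < n ∧ affMap ρ t i 1 = affMap ρ t (i + 1) 0
  compactT : IsCompact T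
  nonemptyT : T.Nonempty
  invT : T = ⋃ i ∈ Finset.range n, affMap ρ t i '' T

/-- The dust-like, equally spaced IFS of the standing setup, with attractor `D`. -/
structure DustIFS (n : ℕ) (ρ : ℕ → ℝ) where
  d : ℕ → ℝ
  D : Set ℝ
  left0 : affMap ρ d 0 0 = 0
  right1 : affMap ρ d (n - 1) 1 = 1
  equal_gap : ∀ i, i + 1 < n →
    affMap ρ d (i + 1) 0 - affMap ρ d i 1 = (1 - ∑ j ∈ Finset.range n, ρ j) / (n - 1)
  compactD : IsCompact D
  nonemptyD : D.Nonempty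
  invD : D = ⋃ i ∈ Finset.range n, affMap ρ d i '' D

variable {n : ℕ} {ρ : ℕ → ℝ}

/-- Cylinder `T_w`. -/
def TouchingIFS.cyl (S : TouchingIFS n ρ) (w : List ℕ) : Set ℝ := affWord ρ S.t w '' S.T

/-- `i` is a (left) touching letter. -/
def TouchingIFS.touch (S : TouchingIFS n ρ) (i : ℕ) : Prop :=
  i + 1 < n ∧ affMap ρ S.t i 1 = affMap ρ S.t (i + 1) 0

/-- Left touching patch `L_k(T_w)` (with `α` the initial touching run length). -/
def TouchingIFS.patchL (S : TouchingIFS n ρ) (α : ℕ) (w : List ℕ) (k : ℕ) : Set ℝ :=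
  ⋃ j ∈ Finset.range α, S.cyl (w ++ List.replicate k 0 ++ [j])

/-- Right touching patch `R_k(T_w)` (with `β` the final touching run length). -/
def TouchingIFS.patchR (S : TouchingIFS n ρ) (β : ℕ) (w : List ℕ) (k : ℕ) : Set ℝ :=
  ⋃ j ∈ Finset.Ico (n - β) n, S.cyl (w ++ List.replicate k (n - 1) ++ [j])

/-- `α` is the number of successive touching intervals at the beginning. -/
def TouchingIFS.alphaRun (S : TouchingIFS n ρ) (α : ℕ) : Prop :=
  1 ≤ α ∧ α < n ∧ (∀ i, i + 1 < α → S.touch i) ∧ ¬ S.touch (α - 1)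

/-- `β` is the number of successive touching intervals at the end. -/
def TouchingIFS.betaRun (S : TouchingIFS n ρ) (β : ℕ) : Prop :=
  1 ≤ β ∧ β < n ∧ (∀ i, n - β ≤ i → i + 1 < n → S.touch i) ∧ ¬ S.touch (n - β - 1)

/-- Cylinder `D_w`. -/
def DustIFS.cyl (Q : DustIFS n ρ) (w : List ℕ) : Set ℝ := affWord ρ Q.d w '' Q.D

/-- Left patch `L_k(D_w)`. -/
def DustIFS.patchL (Q : DustIFS n ρ) (α : ℕ) (w : List ℕ) (k : ℕ) : Set ℝ :=
  ⋃ j ∈ Finset.range α, Q.cyl (w ++ List.replicate k 0 ++ [j])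

/-- Right patch `R_k(D_w)`. -/
def DustIFS.patchR (Q : DustIFS n ρ) (β : ℕ) (w : List ℕ) (k : ℕ) : Set ℝ :=
  ⋃ j ∈ Finset.Ico (n - β) n, Q.cyl (w ++ List.replicate k (n - 1) ++ [j])

/-- `τ k` is the unique positive integer with `ρₙᵏ ρ₁ < ρ₁ ^ τ(k) ≤ ρₙᵏ`. -/
def tauSpec (ρ : ℕ → ℝ) (n : ℕ) (τ : ℕ → ℕ) : Prop :=
  ∀ k, 1 ≤ k → 1 ≤ τ k ∧ ρ (n - 1) ^ k * ρ 0 < ρ 0 ^ τ k ∧ ρ 0 ^ τ k ≤ ρ (n - 1) ^ k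

/-- `Cᵏ = R_k(T_{i₀}) ∪ L_{τ(k)}(T_{i₀+1})`. -/
def Cset (S : TouchingIFS n ρ) (α β i₀ : ℕ) (τ : ℕ → ℕ) (k : ℕ) : Set ℝ :=
  S.patchR β [i₀] k ∪ S.patchL α [i₀ + 1] (τ k)

/-- The touching letter `i` is left substitutable. -/
def TouchingIFS.LeftSub (S : TouchingIFS n ρ) (α : ℕ) (i : ℕ) : Prop :=
  ∃ (w : List ℕ) (a : ℕ) (k k' : ℕ), (∀ b ∈ w ++ [a], b < n) ∧
    Metric.diam (S.patchL α [i + 1] k) = Metric.diam (S.patchL α (i :: (w ++ [a])) k') ∧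
    a ≠ 0 ∧ ∀ ℓ, S.touch ℓ → a ≠ ℓ + 1

/-- The touching letter `i` is right substitutable. -/
def TouchingIFS.RightSub (S : TouchingIFS n ρ) (β : ℕ) (i : ℕ) : Prop :=
  ∃ (w : List ℕ) (a : ℕ) (k k' : ℕ), (∀ b ∈ w ++ [a], b < n) ∧
    Metric.diam (S.patchR β [i] k) = Metric.diam (S.patchR β ((i + 1) :: (w ++ [a])) k') ∧
    a ≠ n - 1 ∧ ¬ S.touch a

/-- Convex hull of a bounded set of reals: the minimal closed interval containing it. -/
def CH (B : Set ℝ) : Set ℝ := Set.Icc (sInf B) (sSup B)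

/-- `[a,b]` is a maximal run of touching letters (a first-level connected component). -/
def TouchingIFS.run (S : TouchingIFS n ρ) (a b : ℕ) : Prop :=
  a ≤ b ∧ b < n ∧ (∀ i, a ≤ i → i < b → S.touch i) ∧
  (a = 0 ∨ ¬ S.touch (a - 1)) ∧ (b = n - 1 ∨ ¬ S.touch b)

/-- Membership in the class `𝒯⁽¹⁾`: a `T`-separate copy `Ψ_w(T⁽¹⁾_j)`. -/
def TouchingIFS.T1mem (S : TouchingIFS n ρ) (X : Set ℝ) : Prop :=
  ∃ (w : List ℕ) (a b : ℕ), (∀ c ∈ w, c < n) ∧ S.run a b ∧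
    X = affWord ρ S.t w '' (⋃ j ∈ Finset.Icc a b, S.cyl [j]) ∧
    0 < setDist X (S.T \ X)

/-- Membership in the class `𝒯⁽²⁾`: a copy `Ψ_w(T⁽²⁾_i) = Ψ_w(R₀(T_i) ∪ L₀(T_{i+1}))`. -/
def TouchingIFS.T2mem (S : TouchingIFS n ρ) (α β : ℕ) (X : Set ℝ) : Prop :=
  ∃ (w : List ℕ) (i : ℕ), (∀ c ∈ w, c < n) ∧ S.touch i ∧
    X = affWord ρ S.t w '' (S.patchR β [i] 0 ∪ S.patchL α [i + 1] 0)

/-- An admissible family for the simple decomposition of `E` by the `A i`. -/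
def GoodFam (E : Set ℝ) {k : ℕ} (A : Fin k → Set ℝ) (𝒮 : Finset (Set ℝ)) : Prop :=
  (∀ B ∈ 𝒮, IsCompact B ∧ B ⊆ E) ∧ (⋃ B ∈ 𝒮, B) = E ∧
  (∀ B ∈ 𝒮, ∀ B' ∈ 𝒮, B ≠ B' → CH B ∩ CH B' = ∅) ∧ (∀ i, A i ∈ 𝒮)

/-!
Cut `ℝ` at a finite set `G` of points off `T`: the cells `{y ∈ T | no point of G lies between
x and y}` are compact, pairwise disjoint and cover `T`; increasing cut sets give a hierarchical
sequence, and cut sets that become dense give a convergent one.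

A set `C_w^m` of level `k = |w| + m` is flanked in `T` by a gap on each side (copies of the gaps
after the non-touching letters `n - β - 1` and `α - 1`), so it is a cell as soon as the cut set
contains a point of both gaps and no point of the convex hull of `C_w^m`. The hulls of all the
sets `C_w^m` form a laminar family in which a hull inside another one has larger level (this is
where `ρₙ ≤ ρ₁` enters, through `τ (k + s) ≥ τ k + s`). Hence a cut in a gap flanking a set of
level `j` meets no hull of level `≥ j` and can be kept at every level `k ≥ j`. Finally `T` is
uniformly porous while the hulls of level `≥ k` are shorter than `Rᵏ`, `R = maxᵢ ρᵢ`, so every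
window of length `≍ Rᵏ` contains a cut avoiding them, and finitely many such cuts make the cut set
of level `k` dense at scale `Rᵏ`.
-/

def cutCell (G T : Set ℝ) (x : ℝ) : Set ℝ := {y ∈ T | ∀ g ∈ G, g < y ↔ g < x}

def cutPartition (G T : Set ℝ) : Set (Set ℝ) := cutCell G T '' T

section cutPartition

variable {G G' T : Set ℝ} {x y : ℝ}

lemma mem_cutCell_self (hx : x ∈ T) : x ∈ cutCell G T x := ⟨hx, fun _ _ => Iff.rfl⟩

lemma cutCell_subset : cutCell G T x ⊆ T := fun _ hy => hy.1

lemma cutCell_eq_of_mem (hy : y ∈ cutCell G T x) : cutCell G T y = cutCell G T x := by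
  ext z
  exact and_congr_right fun _ => forall₂_congr fun g hg => by rw [hy.2 g hg]

lemma cutCell_anti (hGG' : G ⊆ G') : cutCell G' T x ⊆ cutCell G T x :=
  fun _ hy => ⟨hy.1, fun g hg => hy.2 g (hGG' hg)⟩

lemma isClosed_cutCell (hT : IsClosed T) (hGT : ∀ g ∈ G, g ∉ T) :
    IsClosed (cutCell G T x) := by
  have : cutCell G T x = T ∩ ⋂ g ∈ G, if g < x then Ici g else Iic g := by
    ext y
    simp only [cutCell, mem_sep_iff, mem_inter_iff, mem_iInter]
    refine and_congr_right fun hy => forall₂_congr fun g hg => ?_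
    have hgy : g ≠ y := fun h => hGT g hg (h ▸ hy)
    split_ifs with hgx <;> simp [hgx, lt_iff_le_and_ne, hgy, hgy.symm]
  rw [this]
  refine hT.inter (isClosed_biInter fun g _ => ?_)
  split_ifs
  exacts [isClosed_Ici, isClosed_Iic]

lemma isCompact_of_mem_cutPartition (hT : IsCompact T) (hGT : ∀ g ∈ G, g ∉ T) {A : Set ℝ}
    (hA : A ∈ cutPartition G T) : IsCompact A := by
  obtain ⟨x, -, rfl⟩ := hA
  exact hT.of_isClosed_subset (isClosed_cutCell hT.isClosed hGT) cutCell_subset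

lemma subset_of_mem_cutPartition {A : Set ℝ} (hA : A ∈ cutPartition G T) : A ⊆ T := by
  obtain ⟨x, -, rfl⟩ := hA
  exact cutCell_subset

lemma sUnion_cutPartition : ⋃₀ cutPartition G T = T :=
  subset_antisymm (sUnion_subset fun _ => subset_of_mem_cutPartition) fun _ hx =>
    ⟨_, mem_image_of_mem _ hx, mem_cutCell_self hx⟩

lemma cutPartition_finite (hG : G.Finite) : (cutPartition G T).Finite := by
  refine (hG.finite_subsets.image fun s => {y ∈ T | ∀ g ∈ G, g < y ↔ g ∈ s}).subset ?_
  rintro _ ⟨x, -, rfl⟩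
  refine ⟨{g ∈ G | g < x}, fun g hg => hg.1, ?_⟩
  ext y
  exact and_congr_right fun _ => forall₂_congr fun g hg => by simp [hg]

lemma inter_eq_empty_of_mem_cutPartition {A B : Set ℝ} (hA : A ∈ cutPartition G T)
    (hB : B ∈ cutPartition G T) (hAB : A ≠ B) : A ∩ B = ∅ := by
  obtain ⟨x, -, rfl⟩ := hA
  obtain ⟨x', -, rfl⟩ := hB
  refine eq_empty_of_forall_notMem fun z hz => hAB ?_
  rw [← cutCell_eq_of_mem hz.1, cutCell_eq_of_mem hz.2]

lemma exists_superset_of_mem_cutPartition (hGG' : G ⊆ G') {B : Set ℝ}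
    (hB : B ∈ cutPartition G' T) : ∃ A ∈ cutPartition G T, B ⊆ A := by
  obtain ⟨x, hx, rfl⟩ := hB
  exact ⟨cutCell G T x, mem_image_of_mem _ hx, cutCell_anti hGG'⟩

lemma diam_le_of_mem_cutPartition {δ : ℝ} (hδ : 0 ≤ δ)
    (hsep : ∀ x ∈ T, ∀ y ∈ T, x + δ < y → ∃ g ∈ G, x < g ∧ g < y) {A : Set ℝ}
    (hA : A ∈ cutPartition G T) : Metric.diam A ≤ δ := by
  obtain ⟨x, -, rfl⟩ := hA
  have key : ∀ y ∈ cutCell G T x, ∀ z ∈ cutCell G T x, y ≤ z → z - y ≤ δ := by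
    intro y hy z hz hyz
    by_contra! h
    obtain ⟨g, hg, hgy, hgz⟩ := hsep y hy.1 z hz.1 (by linarith)
    exact hgy.not_gt (((hy.2 g hg).trans (hz.2 g hg).symm).2 hgz)
  refine Metric.diam_le_of_forall_dist_le hδ fun y hy z hz => ?_
  rw [Real.dist_eq, abs_sub_le_iff]
  rcases le_total y z with h | h
  · exact ⟨by linarith, key y hy z hz h⟩
  · exact ⟨key z hz y hy h, by linarith⟩

lemma cutCell_eq_inter_Icc {a b A B : ℝ} (ha : a ∈ G) (hb : b ∈ G) (haT : a ∉ T)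
    (hsub : T ∩ Icc a b ⊆ Icc A B) (hG : ∀ g ∈ G, g ∉ Icc A B) (hx : x ∈ T ∩ Icc a b) :
    cutCell G T x = T ∩ Icc a b := by
  have hax : a < x := lt_of_le_of_ne hx.2.1 fun h => haT (h ▸ hx.1)
  apply subset_antisymm
  · intro y hy
    refine ⟨hy.1, ((hy.2 a ha).2 hax).le, not_lt.1 fun h => ?_⟩
    exact not_lt.2 hx.2.2 ((hy.2 b hb).1 h)
  intro y hy
  refine ⟨hy.1, fun g hg => ?_⟩
  have hyAB := hsub hy
  have hxAB := hsub hx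
  simp only [mem_Icc, not_and_or, not_le] at hG hyAB hxAB
  rcases hG g hg with h | h
  · exact iff_of_true (by linarith) (by linarith)
  · exact iff_of_false (by linarith) (by linarith)

lemma Icc_subset_Icc_of_mem_gap {a b A B z : ℝ} (hgap : T ∩ Ioo a b = ∅) (hA : A ∈ T) (hB : B ∈ T)
    (hz : z ∈ Ioo a b) (hzAB : z ∈ Icc A B) : Icc a b ⊆ Icc A B := by
  have hAa : A ≤ a := not_lt.1 fun h => hgap.subset ⟨hA, h, hzAB.1.trans_lt hz.2⟩
  have hbB : b ≤ B := not_lt.1 fun h => hgap.subset ⟨hB, hz.1.trans_le hzAB.2, h⟩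
  exact Icc_subset_Icc hAa hbB

end cutPartition

lemma finite_words_length_eq (n L : ℕ) : {w : List ℕ | w.length = L ∧ ∀ a ∈ w, a < n}.Finite := by
  refine ((List.finite_length_eq (Fin n) L).image (List.map Fin.val)).subset ?_
  rintro w ⟨hL, hw⟩
  exact ⟨w.pmap Fin.mk hw, by simp [hL], by simp [List.map_pmap]⟩

lemma exists_finite_net {p : ℝ → Prop} {δ : ℝ} (hδ : 0 < δ) (h : ∀ u, ∃ z ∈ Ioo u (u + δ), p z) :
    ∃ F : Set ℝ, F.Finite ∧ (∀ z ∈ F, p z) ∧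
      ∀ x ∈ Icc (0 : ℝ) 1, ∃ z ∈ F, x < z ∧ z < x + 2 * δ := by
  choose f hf using h
  refine ⟨(fun i : ℕ => f (i * δ)) '' Iic (⌊1 / δ⌋₊ + 1), (finite_Iic _).image _,
    fun z ⟨i, _, hi⟩ => hi ▸ (hf _).2, fun x hx => ?_⟩
  have h1 := Nat.lt_floor_add_one (x / δ)
  have h2 := Nat.floor_le (div_nonneg hx.1 hδ.le)
  rw [div_lt_iff₀ hδ] at h1
  rw [le_div_iff₀ hδ] at h2
  refine ⟨f ((⌊x / δ⌋₊ + 1 : ℕ) * δ), ⟨⌊x / δ⌋₊ + 1, ?_, rfl⟩, ?_, ?_⟩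
  · exact mem_Iic.2 (Nat.add_le_add_right (Nat.floor_le_floor (by gcongr; exact hx.2)) 1)
  · have := (hf ((⌊x / δ⌋₊ + 1 : ℕ) * δ)).1.1
    push_cast at this ⊢
    linarith
  · have := (hf ((⌊x / δ⌋₊ + 1 : ℕ) * δ)).1.2
    push_cast at this ⊢
    linarith

def wordRatio (r : ℕ → ℝ) (w : List ℕ) : ℝ := (w.map r).prod

section affWord

variable {r t : ℕ → ℝ}

lemma affWord_nil_apply (x : ℝ) : affWord r t [] x = x := rfl

lemma affWord_cons_apply (a : ℕ) (w : List ℕ) (x : ℝ) :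
    affWord r t (a :: w) x = affMap r t a (affWord r t w x) := rfl

lemma affWord_append (u v : List ℕ) (x : ℝ) :
    affWord r t (u ++ v) x = affWord r t u (affWord r t v x) := by
  induction u with
  | nil => rfl
  | cons a u ih => simp only [List.cons_append, affWord_cons_apply, ih]

lemma affWord_sub_affWord (w : List ℕ) (x y : ℝ) :
    affWord r t w x - affWord r t w y = wordRatio r w * (x - y) := by
  induction w with
  | nil => simp [affWord, wordRatio]
  | cons a w ih =>
    simp only [affWord_cons_apply, affMap, wordRatio, List.map_cons, List.prod_cons] at ih ⊢
    linear_combination r a * ih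

lemma wordRatio_le_pow {R : ℝ} {w : List ℕ} (hw : ∀ a ∈ w, 0 ≤ r a ∧ r a ≤ R) :
    wordRatio r w ≤ R ^ w.length := by
  induction w with
  | nil => simp [wordRatio]
  | cons a w ih =>
    simp only [wordRatio, List.map_cons, List.prod_cons, List.length_cons, pow_succ'] at ih ⊢
    obtain ⟨h0, hR⟩ := hw a List.mem_cons_self
    exact mul_le_mul hR (ih fun b hb => hw b (List.mem_cons_of_mem a hb))
      (List.prod_nonneg fun x hx => by
        obtain ⟨b, hb, rfl⟩ := List.mem_map.1 hx
        exact (hw b (List.mem_cons_of_mem a hb)).1) (h0.trans hR)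

lemma wordRatio_pos {w : List ℕ} (hw : ∀ a ∈ w, 0 < r a) : 0 < wordRatio r w :=
  List.prod_pos (by simpa using hw)

lemma strictMono_affWord {w : List ℕ} (hw : ∀ a ∈ w, 0 < r a) : StrictMono (affWord r t w) := by
  intro x y hxy
  have := affWord_sub_affWord (r := r) (t := t) w y x
  nlinarith [wordRatio_pos hw]

lemma affMap_mem_Icc {a : ℕ} {z : ℝ} (ha : 0 < r a) (hz : z ∈ Icc 0 1) :
    affMap r t a z ∈ Icc (t a) (t a + r a) := by
  simp only [affMap, mem_Icc] at hz ⊢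
  constructor <;> nlinarith

lemma affMap_mem_Ioo {a : ℕ} {z : ℝ} (ha : 0 < r a) (hz : z ∈ Ioo 0 1) :
    affMap r t a z ∈ Ioo (t a) (t a + r a) := by
  simp only [affMap, mem_Ioo] at hz ⊢
  constructor <;> nlinarith

lemma affMap_le_affMap_iff {a : ℕ} {x y : ℝ} (ha : 0 < r a) :
    affMap r t a x ≤ affMap r t a y ↔ x ≤ y := by
  simp [affMap, mul_le_mul_iff_of_pos_left ha]

lemma wordRatio_cons (a : ℕ) (w : List ℕ) : wordRatio r (a :: w) = r a * wordRatio r w := by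
  simp [wordRatio]

end affWord

lemma ContractionVec.zero_lt (hρ : ContractionVec n ρ) : 0 < n := by
  linarith [hρ.three_le]

lemma ContractionVec.sub_one_lt (hρ : ContractionVec n ρ) : n - 1 < n := by
  have := hρ.three_le
  omega

lemma ContractionVec.pow_mem_Ioc (hρ : ContractionVec n ρ) {a : ℕ}
    (ha : a < n) (m : ℕ) : ρ a ^ m ∈ Ioc 0 1 :=
  ⟨pow_pos (hρ.pos a ha) m, pow_le_one₀ (hρ.pos a ha).le (hρ.lt_one a ha).le⟩

lemma ContractionVec.pow_le_self (hρ : ContractionVec n ρ) {a m : ℕ}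
    (ha : a < n) (hm : 1 ≤ m) : ρ a ^ m ≤ ρ a := by
  simpa using pow_le_pow_of_le_one (hρ.pos a ha).le (hρ.lt_one a ha).le hm

lemma ContractionVec.exists_bounds (hρ : ContractionVec n ρ) :
    ∃ c R : ℝ, 0 < c ∧ R < 1 ∧ ∀ a < n, c ≤ ρ a ∧ ρ a ≤ R := by
  have hne : (Finset.range n).Nonempty := ⟨0, Finset.mem_range.2 hρ.zero_lt⟩
  obtain ⟨a, ha, hmin⟩ := (Finset.range n).exists_min_image ρ hne
  obtain ⟨b, hb, hmax⟩ := (Finset.range n).exists_max_image ρ hne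
  rw [Finset.mem_range] at ha hb
  exact ⟨ρ a, ρ b, hρ.pos a ha, hρ.lt_one b hb, fun i hi =>
    ⟨hmin i (Finset.mem_range.2 hi), hmax i (Finset.mem_range.2 hi)⟩⟩

namespace TouchingIFS

variable (hρ : ContractionVec n ρ) (S : TouchingIFS n ρ)
  {a b : ℕ} {c d x : ℝ} {w : List ℕ}

lemma t_zero : S.t 0 = 0 := by simpa [affMap] using S.left0

lemma t_last_add : S.t (n - 1) + ρ (n - 1) = 1 := by
  simpa [affMap, add_comm] using S.right1

lemma affMap_mem (ha : a < n) (hx : x ∈ S.T) : affMap ρ S.t a x ∈ S.T := by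
  rw [S.invT]
  exact mem_biUnion (Finset.mem_range.2 ha) (mem_image_of_mem _ hx)

lemma affWord_mem (hw : ∀ a ∈ w, a < n) (hx : x ∈ S.T) : affWord ρ S.t w x ∈ S.T := by
  induction w with
  | nil => exact hx
  | cons a w ih =>
    exact S.affMap_mem (hw a List.mem_cons_self) (ih fun b hb => hw b (List.mem_cons_of_mem a hb))

lemma exists_affMap_eq (hx : x ∈ S.T) : ∃ a < n, ∃ y ∈ S.T, affMap ρ S.t a y = x := by
  rw [S.invT] at hx
  simpa using hx

lemma cyl_cons (a : ℕ) (w : List ℕ) :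
    S.cyl (a :: w) = affMap ρ S.t a '' S.cyl w := by
  simp only [TouchingIFS.cyl, image_image]
  rfl

lemma patchR_cons (β a : ℕ) (w : List ℕ) (m : ℕ) :
    S.patchR β (a :: w) m = affMap ρ S.t a '' S.patchR β w m := by
  simp only [TouchingIFS.patchR, image_iUnion₂, List.cons_append, S.cyl_cons]

lemma patchL_cons (α a : ℕ) (w : List ℕ) (j : ℕ) :
    S.patchL α (a :: w) j = affMap ρ S.t a '' S.patchL α w j := by
  simp only [TouchingIFS.patchL, image_iUnion₂, List.cons_append, S.cyl_cons]

lemma add_lt_t_of_not_touch (ha : a + 1 < n) (h : ¬ S.touch a) : S.t a + ρ a < S.t (a + 1) := by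
  have := S.order a ha
  simp only [affMap, mul_one, mul_zero, zero_add] at this
  refine lt_of_le_of_ne (by linarith) fun heq => h ⟨ha, ?_⟩
  simp only [affMap]
  linarith

include hρ

lemma t_add_le_t (hab : a < b) (hb : b < n) : S.t a + ρ a ≤ S.t b := by
  induction b, hab using Nat.le_induction with
  | base => simpa [affMap, add_comm] using S.order a hb
  | succ b hab ih =>
    have := S.order b hb
    simp only [affMap, mul_one, mul_zero, zero_add] at this
    linarith [ih (by omega), hρ.pos b (by omega)]

lemma t_le_t (hab : a ≤ b) (hb : b < n) : S.t a ≤ S.t b := by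
  rcases hab.lt_or_eq with h | rfl
  · linarith [S.t_add_le_t hρ h hb, hρ.pos a (by omega)]
  · rfl

lemma t_nonneg (ha : a < n) : 0 ≤ S.t a := S.t_zero ▸ S.t_le_t hρ (Nat.zero_le a) ha

lemma t_add_le_one (ha : a < n) : S.t a + ρ a ≤ 1 := by
  rcases (Nat.le_sub_one_of_lt ha).lt_or_eq with h | rfl
  · linarith [S.t_add_le_t hρ h (by omega), S.t_last_add, hρ.pos (n - 1) (by omega)]
  · exact S.t_last_add.le

lemma subset_Icc : S.T ⊆ Icc 0 1 := by
  have hb := S.compactT.bddBelow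
  have ha := S.compactT.bddAbove
  obtain ⟨a, ha', y, hy, hya⟩ := S.exists_affMap_eq (S.compactT.sInf_mem S.nonemptyT)
  obtain ⟨b, hb', z, hz, hzb⟩ := S.exists_affMap_eq (S.compactT.sSup_mem S.nonemptyT)
  have h1 := csInf_le hb hy
  have h2 := le_csSup ha hz
  simp only [affMap] at hya hzb
  have h0 : 0 ≤ sInf S.T := by
    nlinarith [S.t_nonneg hρ ha', hρ.pos a ha', hρ.lt_one a ha']
  have h1' : sSup S.T ≤ 1 := by
    nlinarith [S.t_add_le_one hρ hb', hρ.pos b hb', hρ.lt_one b hb']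
  exact fun x hx => ⟨h0.trans (csInf_le hb hx), (le_csSup ha hx).trans h1'⟩

lemma zero_mem : (0 : ℝ) ∈ S.T := by
  have hn := hρ.zero_lt
  have hm := S.compactT.sInf_mem S.nonemptyT
  have h0 := (S.subset_Icc hρ hm).1
  have h1 := csInf_le S.compactT.bddBelow (S.affMap_mem hn hm)
  simp only [affMap, S.t_zero, add_zero] at h1
  have : sInf S.T = 0 := by nlinarith [hρ.lt_one 0 hn]
  exact this ▸ hm

lemma one_mem : (1 : ℝ) ∈ S.T := by
  have hn := hρ.sub_one_lt
  have hM := S.compactT.sSup_mem S.nonemptyT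
  have h0 := (S.subset_Icc hρ hM).2
  have h1 := le_csSup S.compactT.bddAbove (S.affMap_mem hn hM)
  simp only [affMap] at h1
  have : sSup S.T = 1 := by nlinarith [hρ.lt_one (n - 1) hn, S.t_last_add]
  exact this ▸ hM

lemma affWord_mem_Ioo (hw : ∀ a ∈ w, a < n) (hx : x ∈ Ioo 0 1) :
    affWord ρ S.t w x ∈ Ioo 0 1 := by
  have hmono := strictMono_affWord (t := S.t) fun a ha => hρ.pos a (hw a ha)
  exact ⟨(S.subset_Icc hρ (S.affWord_mem hw (S.zero_mem hρ))).1.trans_lt (hmono hx.1),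
    (hmono hx.2).trans_le (S.subset_Icc hρ (S.affWord_mem hw (S.one_mem hρ))).2⟩

/-- Neighbouring first-level pieces can only share the endpoints `Ψ_a 0` and `Ψ_a 1`. -/
lemma mem_image_affMap_of_mem_Icc (ha : a < n) (hxT : x ∈ S.T)
    (hx : x ∈ Icc (S.t a) (S.t a + ρ a)) : x ∈ affMap ρ S.t a '' S.T := by
  obtain ⟨b, hb, y, hy, rfl⟩ := S.exists_affMap_eq hxT
  have hyI := affMap_mem_Icc (t := S.t) (hρ.pos b hb) (S.subset_Icc hρ hy)
  rcases lt_trichotomy b a with h | rfl | h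
  · refine ⟨0, S.zero_mem hρ, ?_⟩
    have : affMap ρ S.t a 0 = S.t a := by simp [affMap]
    linarith [S.t_add_le_t hρ h ha, hyI.2, hx.1]
  · exact mem_image_of_mem _ hy
  · refine ⟨1, S.one_mem hρ, ?_⟩
    have : affMap ρ S.t a 1 = S.t a + ρ a := by simp [affMap, add_comm]
    linarith [S.t_add_le_t hρ h hb, hyI.1, hx.2]

lemma inter_Icc_affMap (ha : a < n) (hc : 0 ≤ c) (hd : d ≤ 1) :
    S.T ∩ Icc (affMap ρ S.t a c) (affMap ρ S.t a d) = affMap ρ S.t a '' (S.T ∩ Icc c d) := by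
  have hmono := strictMono_affWord (r := ρ) (t := S.t) (w := [a]) (by simpa using hρ.pos a ha)
  apply subset_antisymm
  · rintro x ⟨hxT, hx⟩
    have h0 := hmono.monotone hc
    have h1 := hmono.monotone hd
    simp only [affWord, Function.comp_apply, id] at h0 h1
    obtain ⟨y, hy, rfl⟩ := S.mem_image_affMap_of_mem_Icc hρ ha hxT
      ⟨by simpa [affMap] using h0.trans hx.1, by simpa [affMap, add_comm] using hx.2.trans h1⟩
    exact ⟨y, ⟨hy, hmono.le_iff_le.1 hx.1, hmono.le_iff_le.1 hx.2⟩, rfl⟩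
  · rintro _ ⟨y, ⟨hy, hcy, hyd⟩, rfl⟩
    exact ⟨S.affMap_mem ha hy, hmono.monotone hcy, hmono.monotone hyd⟩

lemma inter_Icc_affWord (hw : ∀ a ∈ w, a < n) (hc : 0 ≤ c) (hd : d ≤ 1) :
    S.T ∩ Icc (affWord ρ S.t w c) (affWord ρ S.t w d) = affWord ρ S.t w '' (S.T ∩ Icc c d) := by
  induction w with
  | nil => simp [affWord]
  | cons a w ih =>
    have hw' : ∀ b ∈ w, b < n := fun b hb => hw b (List.mem_cons_of_mem a hb)
    have hmono := strictMono_affWord (t := S.t) fun a ha => hρ.pos a (hw' a ha)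
    simp only [affWord_cons_apply]
    rw [S.inter_Icc_affMap hρ (hw a List.mem_cons_self)
      ((S.subset_Icc hρ (S.affWord_mem hw' (S.zero_mem hρ))).1.trans (hmono.monotone hc))
      ((hmono.monotone hd).trans (S.subset_Icc hρ (S.affWord_mem hw' (S.one_mem hρ))).2),
      ih hw', image_image]
    rfl

lemma inter_Ioo_affWord_eq_empty (hw : ∀ a ∈ w, a < n) (hc : 0 ≤ c) (hd : d ≤ 1)
    (h : S.T ∩ Ioo c d = ∅) : S.T ∩ Ioo (affWord ρ S.t w c) (affWord ρ S.t w d) = ∅ := by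
  have hmono := strictMono_affWord (t := S.t) fun a ha => hρ.pos a (hw a ha)
  refine eq_empty_of_forall_notMem fun x ⟨hxT, hx⟩ => ?_
  obtain ⟨y, ⟨hy, -⟩, rfl⟩ : x ∈ affWord ρ S.t w '' (S.T ∩ Icc c d) :=
    S.inter_Icc_affWord hρ hw hc hd ▸ ⟨hxT, hx.1.le, hx.2.le⟩
  exact h.subset ⟨hy, hmono.lt_iff_lt.1 hx.1, hmono.lt_iff_lt.1 hx.2⟩

lemma t_add_le_t_add (hba : b ≤ a) (ha : a < n) : S.t b + ρ b ≤ S.t a + ρ a := by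
  rcases hba.lt_or_eq with h | rfl
  · linarith [S.t_add_le_t hρ h ha, hρ.pos a ha]
  · rfl

lemma inter_Ioo_eq_empty (ha : a + 1 < n) : S.T ∩ Ioo (S.t a + ρ a) (S.t (a + 1)) = ∅ := by
  refine eq_empty_of_forall_notMem fun x ⟨hxT, hx⟩ => ?_
  obtain ⟨b, hb, y, hy, rfl⟩ := S.exists_affMap_eq hxT
  have hyI := affMap_mem_Icc (t := S.t) (hρ.pos b hb) (S.subset_Icc hρ hy)
  rcases Nat.lt_or_ge a b with h | h
  · linarith [S.t_le_t hρ (show a + 1 ≤ b by omega) hb, hx.2, hyI.1]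
  · linarith [S.t_add_le_t_add hρ h (by omega), hx.1, hyI.2]

lemma exists_word_ratio_mem_Ico {c R : ℝ} (hc : 0 < c) (hbd : ∀ a < n, c ≤ ρ a ∧ ρ a ≤ R)
    (N : ℕ) : ∀ s, R ^ N < s → s ≤ 1 → ∀ x ∈ S.T, ∃ w : List ℕ, (∀ a ∈ w, a < n) ∧
      x ∈ affWord ρ S.t w '' S.T ∧ c * s ≤ wordRatio ρ w ∧ wordRatio ρ w < s := by
  induction N with
  | zero => intro s hs hs1; simp only [pow_zero] at hs; linarith
  | succ N ih =>
    intro s hs hs1 x hx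
    obtain ⟨a, ha, y, hy, rfl⟩ := S.exists_affMap_eq hx
    have hρa := hρ.pos a ha
    by_cases hlt : ρ a < s
    · refine ⟨[a], by simpa using ha, ⟨y, hy, rfl⟩, ?_, by simpa [wordRatio] using hlt⟩
      simp only [wordRatio, List.map_cons, List.map_nil, List.prod_cons, List.prod_nil, mul_one]
      nlinarith [(hbd a ha).1]
    · have hR : 0 ≤ R ^ N := pow_nonneg (hρa.le.trans (hbd a ha).2) N
      obtain ⟨w, hw, ⟨z, hz, hzy⟩, h1, h2⟩ := ih (s / ρ a)
        (by rw [lt_div_iff₀ hρa, pow_succ] at *; nlinarith [(hbd a ha).2])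
        (by rw [div_le_one hρa]; linarith) y hy
      refine ⟨a :: w, ?_, ⟨z, hz, by rw [affWord_cons_apply, hzy]⟩, ?_, ?_⟩
      · simpa [ha] using hw
      · rw [wordRatio_cons]
        calc c * s = ρ a * (c * (s / ρ a)) := by field_simp
          _ ≤ ρ a * wordRatio ρ w := mul_le_mul_of_nonneg_left h1 hρa.le
      · rw [wordRatio_cons]
        calc ρ a * wordRatio ρ w < ρ a * (s / ρ a) := mul_lt_mul_of_pos_left h2 hρa
          _ = s := by field_simp

/-- Uniform porosity: the gap is a copy of the gap after the non-touching letter `a` under a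
cylinder of size comparable to `δ`. -/
lemma exists_gap_in_window {a : ℕ} (ha : a + 1 < n) (hna : ¬ S.touch a) :
    ∃ κ > 0, ∀ δ, 0 < δ → δ ≤ 1 → ∀ u, ∃ x y, u ≤ x ∧ x < y ∧ y ≤ u + δ ∧ κ * δ ≤ y - x ∧
      S.T ∩ Ioo x y = ∅ := by
  obtain ⟨c, R, hc, hR1, hbd⟩ := hρ.exists_bounds
  have hgap := S.add_lt_t_of_not_touch ha hna
  refine ⟨min (1 / 3) (c * (S.t (a + 1) - (S.t a + ρ a)) / 3),
    lt_min (by norm_num) (by have := mul_pos hc (sub_pos.2 hgap); positivity),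
    fun δ hδ hδ1 u => ?_⟩
  have hκ1 := min_le_left (1 / 3 : ℝ) (c * (S.t (a + 1) - (S.t a + ρ a)) / 3)
  have hκ2 := min_le_right (1 / 3 : ℝ) (c * (S.t (a + 1) - (S.t a + ρ a)) / 3)
  by_cases hmid : S.T ∩ Ioo (u + δ / 3) (u + 2 * δ / 3) = ∅
  · exact ⟨u + δ / 3, u + 2 * δ / 3, by linarith, by linarith, by linarith, by nlinarith, hmid⟩
  obtain ⟨x₀, hx₀T, hx₀⟩ := nonempty_iff_ne_empty.2 hmid
  obtain ⟨N, hN⟩ := exists_pow_lt_of_lt_one (show 0 < δ / 3 by positivity) hR1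
  obtain ⟨w, hw, ⟨y₀, hy₀, rfl⟩, hcw, hwδ⟩ :=
    S.exists_word_ratio_mem_Ico hρ hc hbd N (δ / 3) hN (by linarith) _ hx₀T
  have hmono := strictMono_affWord (t := S.t) fun b hb => hρ.pos b (hw b hb)
  have hy01 := S.subset_Icc hρ hy₀
  have ht0 := S.t_nonneg hρ (a := a) (by omega)
  have ht1 := S.t_add_le_one hρ (a := a + 1) ha
  have hρa := hρ.pos a (by omega)
  have hρa1 := hρ.pos (a + 1) ha
  have h0 := hmono.monotone (show 0 ≤ S.t a + ρ a by linarith)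
  have h1 := hmono.monotone (show S.t (a + 1) ≤ 1 by linarith)
  have hlo := hmono.monotone hy01.1
  have hhi := hmono.monotone hy01.2
  have hwidth := affWord_sub_affWord (r := ρ) (t := S.t) w 1 0
  have hlen := affWord_sub_affWord (r := ρ) (t := S.t) w (S.t (a + 1)) (S.t a + ρ a)
  simp only [mem_Ioo] at hx₀
  refine ⟨_, _, by linarith, hmono hgap, by linarith, ?_,
    S.inter_Ioo_affWord_eq_empty hρ hw (by linarith) (by linarith) (S.inter_Ioo_eq_empty hρ ha)⟩
  rw [hlen]
  nlinarith [mul_le_mul_of_nonneg_left hκ2 hδ.le]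

end TouchingIFS
structure TouchingSetup (n : ℕ) (ρ : ℕ → ℝ) where
  S : TouchingIFS n ρ
  α : ℕ
  β : ℕ
  i₀ : ℕ
  τ : ℕ → ℕ
  contraction : ContractionVec n ρ
  alpha_run : S.alphaRun α
  beta_run : S.betaRun β
  touch_i₀ : S.touch i₀
  rho_last_le : ρ (n - 1) ≤ ρ 0
  tau_spec : tauSpec ρ n τ

namespace TouchingSetup

variable (P : TouchingSetup n ρ) {j k m r : ℕ} {v w : List ℕ}

lemma i₀_succ_lt : P.i₀ + 1 < n := P.touch_i₀.1

lemma i₀_lt : P.i₀ < n := by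
  have := P.i₀_succ_lt
  omega

lemma gap_alpha : P.S.t (P.α - 1) + ρ (P.α - 1) < P.S.t P.α := by
  obtain ⟨h1, h2, -, h3⟩ := P.alpha_run
  have := P.S.add_lt_t_of_not_touch (a := P.α - 1) (by omega) h3
  rwa [Nat.sub_add_cancel h1] at this

lemma gap_beta : P.S.t (n - P.β - 1) + ρ (n - P.β - 1) < P.S.t (n - P.β) := by
  obtain ⟨h1, h2, -, h3⟩ := P.beta_run
  have := P.S.add_lt_t_of_not_touch (a := n - P.β - 1) (by omega) h3
  rwa [show n - P.β - 1 + 1 = n - P.β by omega] at this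

lemma inter_Ioo_alpha_eq_empty :
    P.S.T ∩ Ioo (P.S.t (P.α - 1) + ρ (P.α - 1)) (P.S.t P.α) = ∅ := by
  obtain ⟨h1, h2, -⟩ := P.alpha_run
  have := P.S.inter_Ioo_eq_empty P.contraction (a := P.α - 1) (by omega)
  rwa [Nat.sub_add_cancel h1] at this

lemma inter_Ioo_beta_eq_empty :
    P.S.T ∩ Ioo (P.S.t (n - P.β - 1) + ρ (n - P.β - 1)) (P.S.t (n - P.β)) = ∅ := by
  obtain ⟨h1, h2, -⟩ := P.beta_run
  have := P.S.inter_Ioo_eq_empty P.contraction (a := n - P.β - 1) (by omega)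
  rwa [show n - P.β - 1 + 1 = n - P.β by omega] at this

lemma i₀_ne_alpha : P.i₀ ≠ P.α - 1 := fun h => P.alpha_run.2.2.2 (h ▸ P.touch_i₀)

lemma i₀_ne_beta : P.i₀ ≠ n - P.β - 1 := fun h => P.beta_run.2.2.2 (h ▸ P.touch_i₀)

lemma t_i₀_add : P.S.t P.i₀ + ρ P.i₀ = P.S.t (P.i₀ + 1) := by
  simpa [affMap, add_comm] using P.touch_i₀.2

lemma tau_lt_tau_succ (hk : 1 ≤ k) : P.τ k < P.τ (k + 1) := by
  have hn := P.contraction.zero_lt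
  obtain ⟨-, h1, -⟩ := P.tau_spec k hk
  obtain ⟨-, -, h2⟩ := P.tau_spec (k + 1) (by omega)
  have : ρ 0 ^ P.τ (k + 1) < ρ 0 ^ P.τ k := by
    calc ρ 0 ^ P.τ (k + 1) ≤ ρ (n - 1) ^ k * ρ (n - 1) := by rwa [← pow_succ]
      _ ≤ ρ (n - 1) ^ k * ρ 0 := by
        gcongr
        · exact (pow_pos (P.contraction.pos _ (by omega)) k).le
        · exact P.rho_last_le
      _ < ρ 0 ^ P.τ k := h1
  exact (pow_lt_pow_iff_right_of_lt_one₀ (P.contraction.pos 0 hn)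
    (P.contraction.lt_one 0 hn)).1 this

lemma tau_add_le (hk : 1 ≤ k) (s : ℕ) : P.τ k + s ≤ P.τ (k + s) := by
  induction s with
  | zero => rfl
  | succ s ih =>
    have := P.tau_lt_tau_succ (k := k + s) (by omega)
    show P.τ k + (s + 1) ≤ P.τ (k + s + 1)
    omega

lemma tau_mono (hk : 1 ≤ k) (hkm : k ≤ m) : P.τ k ≤ P.τ m := by
  have := P.tau_add_le hk (m - k)
  rw [Nat.add_sub_cancel' hkm] at this
  omega

/-- `R_m(T) = T ∩ [rightPatchMin m, 1]`, see `patchR_nil`. -/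
def rightPatchMin (m : ℕ) : ℝ := affWord ρ P.S.t (List.replicate m (n - 1)) (P.S.t (n - P.β))

/-- `L_j(T) = T ∩ [0, leftPatchMax j]`, see `patchL_nil`. -/
def leftPatchMax (j : ℕ) : ℝ :=
  affWord ρ P.S.t (List.replicate j 0) (P.S.t (P.α - 1) + ρ (P.α - 1))

/-- `Cᵐ = T ∩ [hullMin m, hullMax m]`, see `Cset_eq`. -/
def hullMin (m : ℕ) : ℝ := affMap ρ P.S.t P.i₀ (P.rightPatchMin m)

def hullMax (m : ℕ) : ℝ := affMap ρ P.S.t (P.i₀ + 1) (P.leftPatchMax (P.τ m))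

/-- The convex hull of `C_w^m = Ψ_w(Cᵐ)`. -/
def hull (w : List ℕ) (m : ℕ) : Set ℝ :=
  Icc (affWord ρ P.S.t w (P.hullMin m)) (affWord ρ P.S.t w (P.hullMax m))

/-- The set `C_w^m = Ψ_w(Cᵐ)` of the family `𝒞_{|w| + m}`. -/
def piece (w : List ℕ) (m : ℕ) : Set ℝ := affWord ρ P.S.t w '' Cset P.S P.α P.β P.i₀ P.τ m

lemma rightPatchMin_succ :
    P.rightPatchMin (m + 1) = affMap ρ P.S.t (n - 1) (P.rightPatchMin m) := rfl

lemma leftPatchMax_succ : P.leftPatchMax (j + 1) = affMap ρ P.S.t 0 (P.leftPatchMax j) := rfl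

lemma one_sub_rightPatchMin (m : ℕ) :
    1 - P.rightPatchMin m = ρ (n - 1) ^ m * (1 - P.S.t (n - P.β)) := by
  induction m with
  | zero => simp [rightPatchMin, affWord]
  | succ m ih =>
    rw [rightPatchMin_succ, pow_succ']
    simp only [affMap]
    linear_combination ρ (n - 1) * ih - P.S.t_last_add

lemma leftPatchMax_eq (j : ℕ) :
    P.leftPatchMax j = ρ 0 ^ j * (P.S.t (P.α - 1) + ρ (P.α - 1)) := by
  induction j with
  | zero => simp [leftPatchMax, affWord]
  | succ j ih =>
    rw [leftPatchMax_succ, pow_succ']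
    simp only [affMap]
    linear_combination ρ 0 * ih + P.S.t_zero

lemma t_beta_mem_Ioo : P.S.t (n - P.β) ∈ Ioo 0 1 := by
  obtain ⟨hβ1, hβ, -⟩ := P.beta_run
  have h0 := P.S.t_add_le_t P.contraction (a := 0) (b := n - P.β) (by omega) (by omega)
  have h1 := P.S.t_add_le_one P.contraction (a := n - P.β) (by omega)
  rw [P.S.t_zero] at h0
  exact ⟨by linarith [P.contraction.pos 0 (by omega)], by
    linarith [P.contraction.pos (n - P.β) (by omega)]⟩

lemma leftPatchMax_zero_mem_Ioo : P.S.t (P.α - 1) + ρ (P.α - 1) ∈ Ioo 0 1 := by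
  obtain ⟨h1, hα, -⟩ := P.alpha_run
  have := P.S.t_add_le_one P.contraction (a := P.α) hα
  exact ⟨by linarith [P.S.t_nonneg P.contraction (a := P.α - 1) (by omega),
    P.contraction.pos (P.α - 1) (by omega)], by
    linarith [P.gap_alpha, P.contraction.pos P.α hα]⟩

lemma rightPatchMin_mem (m : ℕ) : P.rightPatchMin m ∈ P.S.T := by
  obtain ⟨hβ1, hβ, -⟩ := P.beta_run
  refine P.S.affWord_mem (fun b hb => ?_) ?_
  · rw [List.eq_of_mem_replicate hb]; omega
  · simpa [affMap] using P.S.affMap_mem (a := n - P.β) (by omega) (P.S.zero_mem P.contraction)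

lemma leftPatchMax_mem (j : ℕ) : P.leftPatchMax j ∈ P.S.T := by
  obtain ⟨-, hα, -⟩ := P.alpha_run
  refine P.S.affWord_mem (fun b hb => ?_) ?_
  · rw [List.eq_of_mem_replicate hb]; omega
  · simpa [affMap, add_comm] using
      P.S.affMap_mem (a := P.α - 1) (by omega) (P.S.one_mem P.contraction)

lemma t_beta_le_rightPatchMin (m : ℕ) : P.S.t (n - P.β) ≤ P.rightPatchMin m := by
  have := P.one_sub_rightPatchMin m
  have := P.contraction.pow_mem_Ioc P.contraction.sub_one_lt m
  nlinarith [P.t_beta_mem_Ioo.2, this.2]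

lemma rightPatchMin_lt_one (m : ℕ) : P.rightPatchMin m < 1 := by
  have := P.one_sub_rightPatchMin m
  have := P.contraction.pow_mem_Ioc P.contraction.sub_one_lt m
  nlinarith [P.t_beta_mem_Ioo.2, this.1]

lemma rightPatchMin_mono : Monotone P.rightPatchMin := by
  intro m m' h
  have hn := P.contraction.sub_one_lt
  have := P.one_sub_rightPatchMin m
  have := P.one_sub_rightPatchMin m'
  have := pow_le_pow_of_le_one (P.contraction.pos _ hn).le (P.contraction.lt_one _ hn).le h
  nlinarith [P.t_beta_mem_Ioo.2]

lemma t_last_lt_rightPatchMin (hm : 1 ≤ m) : P.S.t (n - 1) < P.rightPatchMin m := by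
  have hn := P.contraction.sub_one_lt
  have h1 := P.one_sub_rightPatchMin m
  have h2 := P.contraction.pow_mem_Ioc hn m
  have h3 := P.contraction.pow_le_self hn hm
  nlinarith [P.t_beta_mem_Ioo.1, P.S.t_last_add, h2.1]

lemma leftPatchMax_pos (j : ℕ) : 0 < P.leftPatchMax j := by
  rw [leftPatchMax_eq]
  exact mul_pos (pow_pos (P.contraction.pos 0 P.contraction.zero_lt) j)
    P.leftPatchMax_zero_mem_Ioo.1

lemma leftPatchMax_le (j : ℕ) : P.leftPatchMax j ≤ P.S.t (P.α - 1) + ρ (P.α - 1) := by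
  rw [leftPatchMax_eq]
  have := P.contraction.pow_mem_Ioc P.contraction.zero_lt j
  nlinarith [P.leftPatchMax_zero_mem_Ioo.1, this.2]

lemma leftPatchMax_lt_one (j : ℕ) : P.leftPatchMax j < 1 :=
  (P.leftPatchMax_le j).trans_lt P.leftPatchMax_zero_mem_Ioo.2

lemma leftPatchMax_lt_rho_zero (hj : 1 ≤ j) : P.leftPatchMax j < ρ 0 := by
  have h0 := P.contraction.zero_lt
  rw [leftPatchMax_eq]
  have h1 := P.contraction.pow_le_self h0 hj
  have h2 := P.leftPatchMax_zero_mem_Ioo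
  nlinarith [h2.1, h2.2, pow_pos (P.contraction.pos 0 h0) j]

lemma leftPatchMax_antitone : Antitone P.leftPatchMax := by
  intro j j' h
  have h0 := P.contraction.zero_lt
  simp only [leftPatchMax_eq]
  exact mul_le_mul_of_nonneg_right
    (pow_le_pow_of_le_one (P.contraction.pos 0 h0).le (P.contraction.lt_one 0 h0).le h)
    P.leftPatchMax_zero_mem_Ioo.1.le

lemma t_i₀_lt_hullMin (m : ℕ) : P.S.t P.i₀ < P.hullMin m := by
  have := P.t_beta_mem_Ioo.1.trans_le (P.t_beta_le_rightPatchMin m)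
  have := P.contraction.pos P.i₀ P.i₀_lt
  simp only [hullMin, affMap]
  nlinarith

lemma hullMin_le_t (m : ℕ) : P.hullMin m ≤ P.S.t (P.i₀ + 1) := by
  have := P.rightPatchMin_lt_one m
  have := P.contraction.pos P.i₀ P.i₀_lt
  simp only [hullMin, affMap]
  nlinarith [P.t_i₀_add]

lemma t_le_hullMax (m : ℕ) : P.S.t (P.i₀ + 1) ≤ P.hullMax m := by
  have := P.leftPatchMax_pos (P.τ m)
  have := P.contraction.pos (P.i₀ + 1) P.i₀_succ_lt
  simp only [hullMax, affMap]
  nlinarith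

lemma hullMax_lt (m : ℕ) : P.hullMax m < P.S.t (P.i₀ + 1) + ρ (P.i₀ + 1) := by
  have := P.leftPatchMax_lt_one (P.τ m)
  have := P.contraction.pos (P.i₀ + 1) P.i₀_succ_lt
  simp only [hullMax, affMap]
  nlinarith

lemma hullMin_mem_Ioo (m : ℕ) : P.hullMin m ∈ Ioo 0 1 :=
  ⟨(P.S.t_nonneg P.contraction P.i₀_lt).trans_lt (P.t_i₀_lt_hullMin m),
    (P.hullMin_le_t m).trans_lt ((P.t_le_hullMax m).trans_lt ((P.hullMax_lt m).trans_le
      (P.S.t_add_le_one P.contraction P.i₀_succ_lt)))⟩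

lemma hullMax_mem_Ioo (m : ℕ) : P.hullMax m ∈ Ioo 0 1 :=
  ⟨(P.hullMin_mem_Ioo m).1.trans_le ((P.hullMin_le_t m).trans (P.t_le_hullMax m)),
    (P.hullMax_lt m).trans_le (P.S.t_add_le_one P.contraction P.i₀_succ_lt)⟩

lemma patchR_nil (m : ℕ) : P.S.patchR P.β [] m = P.S.T ∩ Icc (P.rightPatchMin m) 1 := by
  obtain ⟨hβ1, hβ, -⟩ := P.beta_run
  induction m with
  | zero =>
    ext x
    simp only [TouchingIFS.patchR, TouchingIFS.cyl, List.replicate_zero, List.append_nil,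
      List.nil_append, mem_iUnion, Finset.mem_Ico, exists_prop]
    constructor
    · rintro ⟨b, hb, y, hy, rfl⟩
      have := affMap_mem_Icc (t := P.S.t) (P.contraction.pos b hb.2)
        (P.S.subset_Icc P.contraction hy)
      exact ⟨P.S.affMap_mem hb.2 hy, (P.S.t_le_t P.contraction hb.1 hb.2).trans this.1,
        this.2.trans (P.S.t_add_le_one P.contraction hb.2)⟩
    · rintro ⟨hxT, hx, -⟩
      obtain ⟨b, hb, y, hy, rfl⟩ := P.S.exists_affMap_eq hxT
      refine ⟨b, ⟨not_lt.1 fun h => ?_, hb⟩, y, hy, rfl⟩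
      have := affMap_mem_Icc (t := P.S.t) (P.contraction.pos b hb) (P.S.subset_Icc P.contraction hy)
      linarith [P.S.t_add_le_t_add P.contraction (show b ≤ n - P.β - 1 by omega) (by omega),
        P.gap_beta, this.2, show P.rightPatchMin 0 = P.S.t (n - P.β) from rfl]
  | succ m ih =>
    have hn : n - 1 < n := by omega
    have : P.S.patchR P.β [] (m + 1) = P.S.patchR P.β [n - 1] m := by
      simp [TouchingIFS.patchR, List.replicate_succ]
    rw [this, P.S.patchR_cons, ih, ← P.S.inter_Icc_affMap P.contraction hn
      (P.t_beta_mem_Ioo.1.le.trans (P.t_beta_le_rightPatchMin m)) le_rfl, P.S.right1]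
    rfl

lemma patchL_nil (j : ℕ) : P.S.patchL P.α [] j = P.S.T ∩ Icc 0 (P.leftPatchMax j) := by
  obtain ⟨hα1, hα, -⟩ := P.alpha_run
  induction j with
  | zero =>
    ext x
    simp only [TouchingIFS.patchL, TouchingIFS.cyl, List.replicate_zero, List.append_nil,
      List.nil_append, mem_iUnion, Finset.mem_range, exists_prop]
    constructor
    · rintro ⟨b, hb, y, hy, rfl⟩
      have := affMap_mem_Icc (t := P.S.t) (P.contraction.pos b (by omega))
        (P.S.subset_Icc P.contraction hy)
      exact ⟨P.S.affMap_mem (by omega) hy, (P.S.t_nonneg P.contraction (by omega)).trans this.1,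
        this.2.trans (P.S.t_add_le_t_add P.contraction (show b ≤ P.α - 1 by omega) (by omega))⟩
    · rintro ⟨hxT, -, hx⟩
      obtain ⟨b, hb, y, hy, rfl⟩ := P.S.exists_affMap_eq hxT
      refine ⟨b, not_le.1 fun h => ?_, y, hy, rfl⟩
      have := affMap_mem_Icc (t := P.S.t) (P.contraction.pos b hb) (P.S.subset_Icc P.contraction hy)
      linarith [P.S.t_le_t P.contraction h hb, P.gap_alpha, this.1,
        show P.leftPatchMax 0 = P.S.t (P.α - 1) + ρ (P.α - 1) from rfl]
  | succ j ih =>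
    have : P.S.patchL P.α [] (j + 1) = P.S.patchL P.α [0] j := by
      simp [TouchingIFS.patchL, List.replicate_succ]
    rw [this, P.S.patchL_cons, ih, ← P.S.inter_Icc_affMap P.contraction (by omega) le_rfl
      (P.leftPatchMax_lt_one j).le, P.S.left0]
    rfl

lemma Cset_eq (m : ℕ) : Cset P.S P.α P.β P.i₀ P.τ m = P.S.T ∩ Icc (P.hullMin m) (P.hullMax m) := by
  have hi := P.i₀_succ_lt
  have hp : affMap ρ P.S.t P.i₀ 1 = affMap ρ P.S.t (P.i₀ + 1) 0 := P.touch_i₀.2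
  have ht : affMap ρ P.S.t (P.i₀ + 1) 0 = P.S.t (P.i₀ + 1) := by simp [affMap]
  rw [Cset, show [P.i₀] = P.i₀ :: [] from rfl, show [P.i₀ + 1] = (P.i₀ + 1) :: [] from rfl,
    P.S.patchR_cons, P.S.patchL_cons, P.patchR_nil, P.patchL_nil,
    ← P.S.inter_Icc_affMap P.contraction (by omega)
      (P.t_beta_mem_Ioo.1.le.trans (P.t_beta_le_rightPatchMin m)) le_rfl,
    ← P.S.inter_Icc_affMap P.contraction hi le_rfl (P.leftPatchMax_lt_one _).le, hp,
    ← inter_union_distrib_left, Icc_union_Icc_eq_Icc]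
  · rfl
  · exact ht ▸ P.hullMin_le_t m
  · exact ht ▸ P.t_le_hullMax m

lemma piece_eq (hw : ∀ a ∈ w, a < n) : P.piece w m = P.S.T ∩ P.hull w m := by
  rw [piece, Cset_eq, ← P.S.inter_Icc_affWord P.contraction hw (P.hullMin_mem_Ioo m).1.le
    (P.hullMax_mem_Ioo m).2.le]
  rfl

lemma hullMax_sub_hullMin_le (hm : 1 ≤ m) : P.hullMax m - P.hullMin m ≤ ρ (n - 1) ^ m := by
  have hi := P.i₀_succ_lt
  have hA := P.contraction.pow_mem_Ioc (a := n - 1) (by omega) m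
  have hQ : P.leftPatchMax (P.τ m) ≤ ρ (n - 1) ^ m := by
    have h0 := P.contraction.pow_mem_Ioc (a := 0) (by omega) (P.τ m)
    rw [leftPatchMax_eq]
    exact (mul_le_of_le_one_right h0.1.le P.leftPatchMax_zero_mem_Ioo.2.le).trans
      (P.tau_spec m hm).2.2
  have hq : 1 - P.rightPatchMin m ≤ ρ (n - 1) ^ m := by
    rw [one_sub_rightPatchMin]
    exact mul_le_of_le_one_right hA.1.le (by linarith [P.t_beta_mem_Ioo.1])
  have hsum : ρ P.i₀ + ρ (P.i₀ + 1) ≤ 1 := by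
    linarith [P.t_i₀_add, P.S.t_add_le_one P.contraction hi,
      P.S.t_nonneg P.contraction (show P.i₀ < n by omega)]
  have h1 := mul_le_mul_of_nonneg_left hQ (P.contraction.pos _ hi).le
  have h2 := mul_le_mul_of_nonneg_left hq (P.contraction.pos P.i₀ (by omega)).le
  simp only [hullMax, hullMin, affMap]
  nlinarith [P.t_i₀_add, hA.1]

lemma affWord_hullMax_sub_le {R : ℝ} (hR : ∀ a < n, ρ a ≤ R) (hw : ∀ a ∈ w, a < n)
    (hm : 1 ≤ m) :
    affWord ρ P.S.t w (P.hullMax m) - affWord ρ P.S.t w (P.hullMin m) ≤ R ^ (w.length + m) := by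
  have hn := P.contraction.sub_one_lt
  have h0 : 0 ≤ R := (P.contraction.pos _ hn).le.trans (hR _ hn)
  have hw' := wordRatio_le_pow (r := ρ) (R := R) (w := w)
    fun a ha => ⟨(P.contraction.pos a (hw a ha)).le, hR a (hw a ha)⟩
  have hρR : ρ (n - 1) ^ m ≤ R ^ m := pow_le_pow_left₀ (P.contraction.pos _ hn).le (hR _ hn) m
  have hd := P.hullMax_sub_hullMin_le hm
  rw [affWord_sub_affWord, pow_add]
  calc wordRatio ρ w * (P.hullMax m - P.hullMin m) ≤ R ^ w.length * ρ (n - 1) ^ m :=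
        mul_le_mul hw' hd (by linarith [P.hullMin_le_t m, P.t_le_hullMax m]) (pow_nonneg h0 _)
    _ ≤ R ^ w.length * R ^ m := mul_le_mul_of_nonneg_left hρR (pow_nonneg h0 _)

lemma rho_zero_le_t_beta : ρ 0 ≤ P.S.t (n - P.β) := by
  obtain ⟨hβ1, hβ, -⟩ := P.beta_run
  simpa [P.S.t_zero] using
    P.S.t_add_le_t P.contraction (a := 0) (b := n - P.β) (by omega) (by omega)

/-- `C_u^r` can only reach into `R_m(T) = T ∩ [rightPatchMin m, 1]` by lying inside it, and then
at a deeper level. -/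
lemma rightPatchMin_le_of_le_hullMax (m : ℕ) {u : List ℕ} (hu : ∀ a ∈ u, a < n) (hr : 1 ≤ r)
    (h : P.rightPatchMin m ≤ affWord ρ P.S.t u (P.hullMax r)) :
    P.rightPatchMin m ≤ affWord ρ P.S.t u (P.hullMin r) ∧ m + 1 ≤ u.length + r := by
  obtain ⟨hβ1, hβ, -⟩ := P.beta_run
  have hi := P.i₀_succ_lt
  induction m generalizing u with
  | zero =>
    refine ⟨?_, by omega⟩
    change P.S.t (n - P.β) ≤ _ at h ⊢
    cases u with
    | nil =>
      rw [affWord_nil_apply] at h ⊢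
      have : n - P.β ≤ P.i₀ := by
        by_contra! hlt
        have := P.i₀_ne_beta
        linarith [P.S.t_add_le_t P.contraction (show P.i₀ + 1 < n - P.β by omega) (by omega),
          P.hullMax_lt r]
      linarith [P.S.t_le_t P.contraction this (by omega), P.t_i₀_lt_hullMin r]
    | cons b u =>
      have hb : b < n := hu b List.mem_cons_self
      have hu' : ∀ a ∈ u, a < n := fun a ha => hu a (List.mem_cons_of_mem b ha)
      have hmax := affMap_mem_Ioo (t := P.S.t) (P.contraction.pos b hb)
        (P.S.affWord_mem_Ioo P.contraction hu' (P.hullMax_mem_Ioo r))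
      have hmin := affMap_mem_Ioo (t := P.S.t) (P.contraction.pos b hb)
        (P.S.affWord_mem_Ioo P.contraction hu' (P.hullMin_mem_Ioo r))
      rw [affWord_cons_apply] at h ⊢
      have : n - P.β ≤ b := by
        by_contra! hlt
        linarith [P.S.t_add_le_t_add P.contraction (show b ≤ n - P.β - 1 by omega) (by omega),
          P.gap_beta, hmax.2]
      linarith [P.S.t_le_t P.contraction this hb, hmin.1]
  | succ m ih =>
    have hq := P.t_last_lt_rightPatchMin (m := m + 1) (by omega)
    cases u with
    | nil =>
      exfalso
      change P.rightPatchMin (m + 1) ≤ P.hullMax r at h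
      rcases (show P.i₀ + 1 ≤ n - 1 by omega).lt_or_eq with hlt | heq
      · linarith [P.S.t_add_le_t P.contraction hlt (by omega), P.hullMax_lt r]
      · rw [rightPatchMin_succ, hullMax, heq,
          affMap_le_affMap_iff (P.contraction.pos _ (by omega))] at h
        have := P.leftPatchMax_lt_rho_zero (P.tau_spec r hr).1
        linarith [P.rho_zero_le_t_beta, P.t_beta_le_rightPatchMin m]
    | cons b u =>
      have hb : b < n := hu b List.mem_cons_self
      have hu' : ∀ a ∈ u, a < n := fun a ha => hu a (List.mem_cons_of_mem b ha)
      have hmax := affMap_mem_Ioo (t := P.S.t) (P.contraction.pos b hb)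
        (P.S.affWord_mem_Ioo P.contraction hu' (P.hullMax_mem_Ioo r))
      rw [affWord_cons_apply] at h ⊢
      obtain rfl : b = n - 1 := by
        by_contra hne
        linarith [P.S.t_add_le_t P.contraction (show b < n - 1 by omega) (by omega), hmax.2]
      rw [rightPatchMin_succ, affMap_le_affMap_iff (P.contraction.pos _ hb)] at h ⊢
      obtain ⟨h1, h2⟩ := ih hu' h
      exact ⟨h1, by simp only [List.length_cons]; omega⟩

/-- `C_u^r` can only reach into `L_j(T) = T ∩ [0, leftPatchMax j]` by lying inside it. -/
lemma hullMax_le_of_hullMin_le (j : ℕ) {u : List ℕ} (hu : ∀ a ∈ u, a < n) (hr : 1 ≤ r)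
    (h : affWord ρ P.S.t u (P.hullMin r) ≤ P.leftPatchMax j) :
    affWord ρ P.S.t u (P.hullMax r) ≤ P.leftPatchMax j ∧ j ≤ u.length + P.τ r := by
  obtain ⟨hα1, hα, -⟩ := P.alpha_run
  have hi := P.i₀_succ_lt
  induction j generalizing u with
  | zero =>
    refine ⟨?_, by omega⟩
    change _ ≤ P.S.t (P.α - 1) + ρ (P.α - 1) at h ⊢
    cases u with
    | nil =>
      rw [affWord_nil_apply] at h ⊢
      have : P.i₀ + 1 ≤ P.α - 1 := by
        by_contra! hlt
        have := P.i₀_ne_alpha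
        linarith [P.S.t_add_le_t P.contraction (show P.α - 1 < P.i₀ by omega) (by omega),
          P.t_i₀_lt_hullMin r]
      linarith [P.S.t_add_le_t_add P.contraction this (by omega), P.hullMax_lt r]
    | cons b u =>
      have hb : b < n := hu b List.mem_cons_self
      have hu' : ∀ a ∈ u, a < n := fun a ha => hu a (List.mem_cons_of_mem b ha)
      have hmax := affMap_mem_Ioo (t := P.S.t) (P.contraction.pos b hb)
        (P.S.affWord_mem_Ioo P.contraction hu' (P.hullMax_mem_Ioo r))
      have hmin := affMap_mem_Ioo (t := P.S.t) (P.contraction.pos b hb)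
        (P.S.affWord_mem_Ioo P.contraction hu' (P.hullMin_mem_Ioo r))
      rw [affWord_cons_apply] at h ⊢
      have : b ≤ P.α - 1 := by
        by_contra! hlt
        linarith [P.S.t_le_t P.contraction (show P.α ≤ b by omega) hb, P.gap_alpha, hmin.1]
      linarith [P.S.t_add_le_t_add P.contraction this (by omega), hmax.2]
  | succ j ih =>
    have hQ := P.leftPatchMax_lt_rho_zero (j := j + 1) (by omega)
    cases u with
    | nil =>
      exfalso
      rw [affWord_nil_apply] at h
      rcases Nat.eq_zero_or_pos P.i₀ with h0 | h0
      · rw [hullMin, leftPatchMax_succ, h0,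
          affMap_le_affMap_iff (P.contraction.pos 0 (by omega))] at h
        linarith [P.leftPatchMax_le j, P.t_last_lt_rightPatchMin hr,
          P.S.t_add_le_t P.contraction (show P.α - 1 < n - 1 by omega) (by omega)]
      · linarith [P.S.t_add_le_t P.contraction h0 (by omega), P.S.t_zero, P.t_i₀_lt_hullMin r]
    | cons b u =>
      have hb : b < n := hu b List.mem_cons_self
      have hu' : ∀ a ∈ u, a < n := fun a ha => hu a (List.mem_cons_of_mem b ha)
      have hmin := affMap_mem_Ioo (t := P.S.t) (P.contraction.pos b hb)
        (P.S.affWord_mem_Ioo P.contraction hu' (P.hullMin_mem_Ioo r))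
      rw [affWord_cons_apply] at h ⊢
      obtain rfl : b = 0 := by
        by_contra hne
        linarith [P.S.t_add_le_t P.contraction (show 0 < b by omega) hb, P.S.t_zero, hmin.1]
      rw [leftPatchMax_succ, affMap_le_affMap_iff (P.contraction.pos 0 hb)] at h ⊢
      obtain ⟨h1, h2⟩ := ih hu' h
      exact ⟨h1, by simp only [List.length_cons]; omega⟩

lemma hull_nested_of_ne_nil (hv : ∀ a ∈ v, a < n) (hv0 : v ≠ []) (hr : 1 ≤ r)
    (h1 : affWord ρ P.S.t v (P.hullMin r) ≤ P.hullMax m)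
    (h2 : P.hullMin m ≤ affWord ρ P.S.t v (P.hullMax r)) :
    P.hullMin m ≤ affWord ρ P.S.t v (P.hullMin r) ∧
      affWord ρ P.S.t v (P.hullMax r) ≤ P.hullMax m ∧ m + 1 ≤ v.length + r := by
  obtain _ | ⟨a, v⟩ := v
  · exact absurd rfl hv0
  have ha : a < n := hv a List.mem_cons_self
  have hv' : ∀ b ∈ v, b < n := fun b hb => hv b (List.mem_cons_of_mem a hb)
  have hi := P.i₀_succ_lt
  have hmax := affMap_mem_Ioo (t := P.S.t) (P.contraction.pos a ha)
    (P.S.affWord_mem_Ioo P.contraction hv' (P.hullMax_mem_Ioo r))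
  have hmin := affMap_mem_Ioo (t := P.S.t) (P.contraction.pos a ha)
    (P.S.affWord_mem_Ioo P.contraction hv' (P.hullMin_mem_Ioo r))
  rw [affWord_cons_apply] at h1 h2 ⊢
  rw [affWord_cons_apply]
  rcases lt_trichotomy a P.i₀ with hlt | rfl | hgt
  · exfalso
    linarith [P.S.t_add_le_t P.contraction hlt (by omega), hmax.2, P.t_i₀_lt_hullMin m]
  · rw [hullMin, affMap_le_affMap_iff (P.contraction.pos _ ha)] at h2
    obtain ⟨h3, h4⟩ := P.rightPatchMin_le_of_le_hullMax m hv' hr h2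
    refine ⟨(affMap_le_affMap_iff (P.contraction.pos _ ha)).2 h3, ?_, ?_⟩
    · linarith [hmax.2, P.t_i₀_add, P.t_le_hullMax m]
    · simp only [List.length_cons]; omega
  · rcases (show P.i₀ + 1 ≤ a by omega).lt_or_eq with hlt | rfl
    · exfalso
      linarith [P.S.t_add_le_t P.contraction hlt ha, hmin.1, P.hullMax_lt m]
    · rw [hullMax, affMap_le_affMap_iff (P.contraction.pos _ ha)] at h1
      obtain ⟨h3, h4⟩ := P.hullMax_le_of_hullMin_le (P.τ m) hv' hr h1
      refine ⟨?_, (affMap_le_affMap_iff (P.contraction.pos _ ha)).2 h3, ?_⟩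
      · linarith [hmin.1, P.hullMin_le_t m]
      · simp only [List.length_cons]
        by_contra! hlev
        have := P.tau_add_le hr (v.length + 1)
        have := P.tau_mono (show 1 ≤ r + (v.length + 1) by omega)
          (show r + (v.length + 1) ≤ m by omega)
        omega

/-- The hulls of the sets of `⋃ₖ 𝒞ₖ` form a laminar family, ordered by level. -/
lemma hull_nested (hw : ∀ a ∈ w, a < n) (hv : ∀ a ∈ v, a < n) (hm : 1 ≤ m) (hr : 1 ≤ r)
    (hlev : w.length + m ≤ v.length + r)
    (h1 : affWord ρ P.S.t v (P.hullMin r) ≤ affWord ρ P.S.t w (P.hullMax m))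
    (h2 : affWord ρ P.S.t w (P.hullMin m) ≤ affWord ρ P.S.t v (P.hullMax r)) :
    affWord ρ P.S.t w (P.hullMin m) ≤ affWord ρ P.S.t v (P.hullMin r) ∧
      affWord ρ P.S.t v (P.hullMax r) ≤ affWord ρ P.S.t w (P.hullMax m) := by
  induction w generalizing v with
  | nil =>
    simp only [affWord_nil_apply, List.length_nil, zero_add] at h1 h2 hlev ⊢
    cases v with
    | nil =>
      have hi := P.i₀_succ_lt
      simp only [affWord_nil_apply, List.length_nil, zero_add] at h1 h2 hlev ⊢
      exact ⟨(affMap_le_affMap_iff (P.contraction.pos _ (by omega))).2 (P.rightPatchMin_mono hlev),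
        (affMap_le_affMap_iff (P.contraction.pos _ hi)).2
          (P.leftPatchMax_antitone (P.tau_mono hm hlev))⟩
    | cons b v =>
      obtain ⟨h3, h4, -⟩ := P.hull_nested_of_ne_nil hv (List.cons_ne_nil b v) hr h1 h2
      exact ⟨h3, h4⟩
  | cons a w ih =>
    cases v with
    | nil =>
      exfalso
      rw [affWord_nil_apply] at h1 h2
      have := (P.hull_nested_of_ne_nil hw (List.cons_ne_nil a w) hm h2 h1).2.2
      simp only [List.length_cons, List.length_nil] at hlev this
      omega
    | cons b v =>
      have ha : a < n := hw a List.mem_cons_self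
      have hb : b < n := hv b List.mem_cons_self
      have hw' : ∀ c ∈ w, c < n := fun c hc => hw c (List.mem_cons_of_mem a hc)
      have hv' : ∀ c ∈ v, c < n := fun c hc => hv c (List.mem_cons_of_mem b hc)
      have hwmax := affMap_mem_Ioo (t := P.S.t) (P.contraction.pos a ha)
        (P.S.affWord_mem_Ioo P.contraction hw' (P.hullMax_mem_Ioo m))
      have hwmin := affMap_mem_Ioo (t := P.S.t) (P.contraction.pos a ha)
        (P.S.affWord_mem_Ioo P.contraction hw' (P.hullMin_mem_Ioo m))
      have hvmax := affMap_mem_Ioo (t := P.S.t) (P.contraction.pos b hb)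
        (P.S.affWord_mem_Ioo P.contraction hv' (P.hullMax_mem_Ioo r))
      have hvmin := affMap_mem_Ioo (t := P.S.t) (P.contraction.pos b hb)
        (P.S.affWord_mem_Ioo P.contraction hv' (P.hullMin_mem_Ioo r))
      simp only [affWord_cons_apply] at h1 h2 ⊢
      obtain rfl : a = b := by
        rcases lt_trichotomy a b with hab | hab | hab
        · linarith [P.S.t_add_le_t P.contraction hab hb, hwmax.2, hvmin.1]
        · exact hab
        · linarith [P.S.t_add_le_t P.contraction hab ha, hvmax.2, hwmin.1]
      simp only [affMap_le_affMap_iff (P.contraction.pos a ha)] at h1 h2 ⊢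
      exact ih hw' hv' (by simp only [List.length_cons] at hlev; omega) h1 h2

lemma hull_subset_hull (hw : ∀ a ∈ w, a < n) (hv : ∀ a ∈ v, a < n) (hm : 1 ≤ m) (hr : 1 ≤ r)
    (hlev : w.length + m ≤ v.length + r) (h : (P.hull w m ∩ P.hull v r).Nonempty) :
    P.hull v r ⊆ P.hull w m := by
  obtain ⟨x, ⟨hx1, hx2⟩, hx3, hx4⟩ := h
  obtain ⟨h1, h2⟩ := P.hull_nested hw hv hm hr hlev (hx3.trans hx2) (hx1.trans hx4)
  exact Icc_subset_Icc h1 h2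

lemma affWord_hullMin_mem (hw : ∀ a ∈ w, a < n) (m : ℕ) :
    affWord ρ P.S.t w (P.hullMin m) ∈ P.S.T :=
  P.S.affWord_mem hw (P.S.affMap_mem P.i₀_lt (P.rightPatchMin_mem m))

lemma affWord_hullMax_mem (hw : ∀ a ∈ w, a < n) (m : ℕ) :
    affWord ρ P.S.t w (P.hullMax m) ∈ P.S.T :=
  P.S.affWord_mem hw (P.S.affMap_mem P.i₀_succ_lt (P.leftPatchMax_mem _))

lemma affWord_hullMin_le_hullMax (hw : ∀ a ∈ w, a < n) (m : ℕ) :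
    affWord ρ P.S.t w (P.hullMin m) ≤ affWord ρ P.S.t w (P.hullMax m) :=
  (strictMono_affWord fun a ha => P.contraction.pos a (hw a ha)).monotone
    ((P.hullMin_le_t m).trans (P.t_le_hullMax m))

def IsAdmissibleCut (k : ℕ) (z : ℝ) : Prop :=
  z ∉ P.S.T ∧ ∀ v r, (∀ a ∈ v, a < n) → 1 ≤ r → k ≤ v.length + r → z ∉ P.hull v r

lemma IsAdmissibleCut.mono {k k' : ℕ} {z : ℝ} (h : P.IsAdmissibleCut k z) (hk : k ≤ k') :
    P.IsAdmissibleCut k' z :=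
  ⟨h.1, fun v r hv hr hlev => h.2 v r hv hr (hk.trans hlev)⟩

/-- A hull of level `≥ |w| + m` containing `z` would contain the whole gap, hence lie inside
`P.hull w m` by laminarity. -/
lemma isAdmissibleCut_of_mem_gap {a b z : ℝ} (hgap : P.S.T ∩ Ioo a b = ∅) (hz : z ∈ Ioo a b)
    (hw : ∀ a ∈ w, a < n) (hm : 1 ≤ m) (hin : (Icc a b ∩ P.hull w m).Nonempty)
    (hout : ¬ Icc a b ⊆ P.hull w m) : P.IsAdmissibleCut (w.length + m) z := by
  refine ⟨fun hzT => hgap.subset ⟨hzT, hz⟩, fun v r hv hr hlev hzv => hout ?_⟩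
  have hsub := Icc_subset_Icc_of_mem_gap hgap (P.affWord_hullMin_mem hv r)
    (P.affWord_hullMax_mem hv r) hz hzv
  obtain ⟨y, hy1, hy2⟩ := hin
  exact hsub.trans (P.hull_subset_hull hw hv hm hr hlev ⟨y, hy2, hsub hy1⟩)

/-- `(leftGapMin w m, min C_w^m)` is a gap of `T`. -/
def leftGapMin (w : List ℕ) (m : ℕ) : ℝ :=
  affWord ρ P.S.t (w ++ P.i₀ :: List.replicate m (n - 1)) (P.S.t (n - P.β - 1) + ρ (n - P.β - 1))

/-- `(max C_w^m, rightGapMax w m)` is a gap of `T`. -/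
def rightGapMax (w : List ℕ) (m : ℕ) : ℝ :=
  affWord ρ P.S.t (w ++ (P.i₀ + 1) :: List.replicate (P.τ m) 0) (P.S.t P.α)

def leftCut (w : List ℕ) (m : ℕ) : ℝ := (P.leftGapMin w m + affWord ρ P.S.t w (P.hullMin m)) / 2

def rightCut (w : List ℕ) (m : ℕ) : ℝ := (affWord ρ P.S.t w (P.hullMax m) + P.rightGapMax w m) / 2

lemma leftGapMin_lt_and_inter_Ioo_eq_empty (hw : ∀ a ∈ w, a < n) (m : ℕ) :
    P.leftGapMin w m < affWord ρ P.S.t w (P.hullMin m) ∧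
      P.S.T ∩ Ioo (P.leftGapMin w m) (affWord ρ P.S.t w (P.hullMin m)) = ∅ := by
  obtain ⟨hβ1, hβ, -⟩ := P.beta_run
  have hi := P.i₀_succ_lt
  have hw' : ∀ a ∈ w ++ P.i₀ :: List.replicate m (n - 1), a < n := by
    simp only [List.mem_append, List.mem_cons, List.mem_replicate]
    rintro a (ha | rfl | ⟨-, rfl⟩) <;> first | exact hw a ha | omega
  have heq : affWord ρ P.S.t w (P.hullMin m) =
      affWord ρ P.S.t (w ++ P.i₀ :: List.replicate m (n - 1)) (P.S.t (n - P.β)) := by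
    rw [affWord_append]; rfl
  rw [heq, leftGapMin]
  exact ⟨strictMono_affWord (fun a ha => P.contraction.pos a (hw' a ha)) P.gap_beta,
    P.S.inter_Ioo_affWord_eq_empty P.contraction hw'
      (by linarith [P.S.t_nonneg P.contraction (a := n - P.β - 1) (by omega),
        P.contraction.pos (n - P.β - 1) (by omega)]) P.t_beta_mem_Ioo.2.le
      P.inter_Ioo_beta_eq_empty⟩

lemma lt_rightGapMax_and_inter_Ioo_eq_empty (hw : ∀ a ∈ w, a < n) (m : ℕ) :
    affWord ρ P.S.t w (P.hullMax m) < P.rightGapMax w m ∧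
      P.S.T ∩ Ioo (affWord ρ P.S.t w (P.hullMax m)) (P.rightGapMax w m) = ∅ := by
  obtain ⟨hα1, hα, -⟩ := P.alpha_run
  have hi := P.i₀_succ_lt
  have hw' : ∀ a ∈ w ++ (P.i₀ + 1) :: List.replicate (P.τ m) 0, a < n := by
    simp only [List.mem_append, List.mem_cons, List.mem_replicate]
    rintro a (ha | rfl | ⟨-, rfl⟩) <;> first | exact hw a ha | omega
  have heq : affWord ρ P.S.t w (P.hullMax m) =
      affWord ρ P.S.t (w ++ (P.i₀ + 1) :: List.replicate (P.τ m) 0)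
        (P.S.t (P.α - 1) + ρ (P.α - 1)) := by
    rw [affWord_append]; rfl
  rw [heq, rightGapMax]
  exact ⟨strictMono_affWord (fun a ha => P.contraction.pos a (hw' a ha)) P.gap_alpha,
    P.S.inter_Ioo_affWord_eq_empty P.contraction hw' P.leftPatchMax_zero_mem_Ioo.1.le
      (by linarith [P.S.t_add_le_one P.contraction hα, P.contraction.pos P.α hα])
      P.inter_Ioo_alpha_eq_empty⟩

lemma leftCut_isAdmissibleCut (hw : ∀ a ∈ w, a < n) (hm : 1 ≤ m) :
    P.IsAdmissibleCut (w.length + m) (P.leftCut w m) := by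
  obtain ⟨hlt, hgap⟩ := P.leftGapMin_lt_and_inter_Ioo_eq_empty hw m
  refine P.isAdmissibleCut_of_mem_gap hgap ⟨by rw [leftCut]; linarith, by rw [leftCut]; linarith⟩
    hw hm ⟨_, right_mem_Icc.2 hlt.le, left_mem_Icc.2 (P.affWord_hullMin_le_hullMax hw m)⟩
    fun h => ?_
  exact (h (left_mem_Icc.2 hlt.le)).1.not_gt hlt

lemma rightCut_isAdmissibleCut (hw : ∀ a ∈ w, a < n) (hm : 1 ≤ m) :
    P.IsAdmissibleCut (w.length + m) (P.rightCut w m) := by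
  obtain ⟨hlt, hgap⟩ := P.lt_rightGapMax_and_inter_Ioo_eq_empty hw m
  refine P.isAdmissibleCut_of_mem_gap hgap ⟨by rw [rightCut]; linarith, by rw [rightCut]; linarith⟩
    hw hm ⟨_, left_mem_Icc.2 hlt.le, right_mem_Icc.2 (P.affWord_hullMin_le_hullMax hw m)⟩
    fun h => ?_
  exact (h (right_mem_Icc.2 hlt.le)).2.not_gt hlt

lemma inter_Icc_leftCut_rightCut (hw : ∀ a ∈ w, a < n) (m : ℕ) :
    P.S.T ∩ Icc (P.leftCut w m) (P.rightCut w m) = P.piece w m := by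
  obtain ⟨hl, hlgap⟩ := P.leftGapMin_lt_and_inter_Ioo_eq_empty hw m
  obtain ⟨hr, hrgap⟩ := P.lt_rightGapMax_and_inter_Ioo_eq_empty hw m
  rw [piece_eq _ hw]
  ext y
  simp only [hull, mem_inter_iff, mem_Icc, leftCut, rightCut]
  refine and_congr_right fun hy => ⟨fun ⟨h1, h2⟩ => ⟨?_, ?_⟩, fun ⟨h1, h2⟩ => ⟨?_, ?_⟩⟩
  · exact not_lt.1 fun h => hlgap.subset ⟨hy, by linarith, h⟩
  · exact not_lt.1 fun h => hrgap.subset ⟨hy, h, by linarith⟩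
  · linarith
  · linarith

lemma piece_mem_cutPartition {G : Set ℝ} (hw : ∀ a ∈ w, a < n) (hm : 1 ≤ m)
    (hl : P.leftCut w m ∈ G) (hr : P.rightCut w m ∈ G)
    (hG : ∀ g ∈ G, P.IsAdmissibleCut (w.length + m) g) : P.piece w m ∈ cutPartition G P.S.T := by
  have hx : affWord ρ P.S.t w (P.hullMin m) ∈ P.S.T ∩ Icc (P.leftCut w m) (P.rightCut w m) := by
    rw [P.inter_Icc_leftCut_rightCut hw, P.piece_eq hw]
    exact ⟨P.affWord_hullMin_mem hw m, left_mem_Icc.2 (P.affWord_hullMin_le_hullMax hw m)⟩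
  refine ⟨_, hx.1, ?_⟩
  rw [cutCell_eq_inter_Icc hl hr (hG _ hl).1 ?_ (fun g hg => (hG g hg).2 w m hw hm le_rfl) hx,
    P.inter_Icc_leftCut_rightCut hw]
  rw [P.inter_Icc_leftCut_rightCut hw, P.piece_eq hw]
  exact inter_subset_right

/-- The midpoint of the gap works, since hulls of level at least `k` are shorter than `R ^ k`. -/
lemma exists_isAdmissibleCut_mem_Ioo {k : ℕ} {κ R δ : ℝ} (hR : ∀ a < n, ρ a ≤ R) (hR1 : R ≤ 1)
    (hk : R ^ k < κ * δ) (u : ℝ)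
    (hgap : ∃ x y, u ≤ x ∧ x < y ∧ y ≤ u + δ ∧ κ * δ ≤ y - x ∧ P.S.T ∩ Ioo x y = ∅) :
    ∃ z ∈ Ioo u (u + δ), P.IsAdmissibleCut k z := by
  obtain ⟨x, y, hux, hxy, hyu, hlen, hT⟩ := hgap
  have hz : (x + y) / 2 ∈ Ioo x y := ⟨by linarith, by linarith⟩
  refine ⟨(x + y) / 2, ⟨by linarith, by linarith⟩, fun hzT => hT.subset ⟨hzT, hz⟩,
    fun v r hv hr hlev hzv => ?_⟩
  have hsub := Icc_subset_Icc_of_mem_gap hT (P.affWord_hullMin_mem hv r)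
    (P.affWord_hullMax_mem hv r) hz hzv
  have hR0 : 0 ≤ R := (P.contraction.pos 0 P.contraction.zero_lt).le.trans
    (hR 0 P.contraction.zero_lt)
  have hwidth := P.affWord_hullMax_sub_le hR hv hr
  have := pow_le_pow_of_le_one hR0 hR1 hlev
  linarith [(hsub (left_mem_Icc.2 hxy.le)).1, (hsub (right_mem_Icc.2 hxy.le)).2]

def isolatingCuts (j : ℕ) : Set ℝ :=
  {z | ∃ w m, (∀ a ∈ w, a < n) ∧ 1 ≤ m ∧ w.length + m = j ∧
    (z = P.leftCut w m ∨ z = P.rightCut w m)}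

lemma isolatingCuts_finite (j : ℕ) : (P.isolatingCuts j).Finite := by
  refine ((finite_Iic j).biUnion fun m _ =>
    (((finite_words_length_eq n (j - m)).image fun w => P.leftCut w m).union
      ((finite_words_length_eq n (j - m)).image fun w => P.rightCut w m))).subset ?_
  rintro z ⟨w, m, hw, hm, rfl, rfl | rfl⟩
  · exact mem_biUnion (mem_Iic.2 (by omega)) (Or.inl ⟨w, ⟨by omega, hw⟩, rfl⟩)
  · exact mem_biUnion (mem_Iic.2 (by omega)) (Or.inr ⟨w, ⟨by omega, hw⟩, rfl⟩)

lemma isAdmissibleCut_of_mem_isolatingCuts {z : ℝ} (hz : z ∈ P.isolatingCuts j) :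
    P.IsAdmissibleCut j z := by
  obtain ⟨w, m, hw, hm, rfl, rfl | rfl⟩ := hz
  exacts [P.leftCut_isAdmissibleCut hw hm, P.rightCut_isAdmissibleCut hw hm]

lemma exists_finite_admissibleCuts {κ R : ℝ} (hκ : 0 < κ) (hR0 : 0 < R) (hR : ∀ a < n, ρ a ≤ R)
    (hR1 : R ≤ 1) (hgap : ∀ δ, 0 < δ → δ ≤ 1 → ∀ u, ∃ x y, u ≤ x ∧ x < y ∧ y ≤ u + δ ∧
      κ * δ ≤ y - x ∧ P.S.T ∩ Ioo x y = ∅) (hk : 2 * R ^ k / κ ≤ 1) :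
    ∃ F : Set ℝ, F.Finite ∧ (∀ z ∈ F, P.IsAdmissibleCut k z) ∧
      ∀ x ∈ Icc (0 : ℝ) 1, ∃ z ∈ F, x < z ∧ z < x + 2 * (2 * R ^ k / κ) := by
  have hδ : 0 < 2 * R ^ k / κ := by positivity
  have hk' : R ^ k < κ * (2 * R ^ k / κ) := by
    rw [mul_div_cancel₀ _ hκ.ne']
    linarith [pow_pos hR0 k]
  exact exists_finite_net hδ fun u =>
    P.exists_isAdmissibleCut_mem_Ioo hR hR1 hk' u (hgap _ hδ hk u)

lemma exists_cutSequence : ∃ G : ℕ → Set ℝ, (∀ k, (G k).Finite) ∧ Monotone G ∧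
    (∀ k, ∀ g ∈ G k, P.IsAdmissibleCut k g) ∧
    (∀ ε > 0, ∃ K, ∀ k ≥ K, ∀ x ∈ P.S.T, ∀ y ∈ P.S.T, x + ε < y → ∃ g ∈ G k, x < g ∧ g < y) ∧
    ∀ k, P.isolatingCuts k ⊆ G k := by
  obtain ⟨c, R, hc, hR1, hbd⟩ := P.contraction.exists_bounds
  obtain ⟨hα1, hα, -, hα'⟩ := P.alpha_run
  obtain ⟨κ, hκ, hgap⟩ := P.S.exists_gap_in_window P.contraction (a := P.α - 1) (by omega) hα'
  have hR0 : 0 < R := hc.trans_le ((hbd 0 (by omega)).1.trans (hbd 0 (by omega)).2)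
  have hfine : ∀ k, ∃ F : Set ℝ, F.Finite ∧ (∀ z ∈ F, P.IsAdmissibleCut k z) ∧
      (2 * R ^ k / κ ≤ 1 → ∀ x ∈ Icc (0 : ℝ) 1, ∃ z ∈ F, x < z ∧ z < x + 2 * (2 * R ^ k / κ)) := by
    intro k
    by_cases hk : 2 * R ^ k / κ ≤ 1
    · obtain ⟨F, hF, hFad, hFnet⟩ :=
        P.exists_finite_admissibleCuts hκ hR0 (fun a ha => (hbd a ha).2) hR1.le hgap hk
      exact ⟨F, hF, hFad, fun _ => hFnet⟩
    · exact ⟨∅, finite_empty, fun z hz => hz.elim, fun h => absurd h hk⟩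
  choose F hFfin hFad hFnet using hfine
  refine ⟨fun k => ⋃ j ∈ Iic k, F j ∪ P.isolatingCuts j,
    fun k => (finite_Iic k).biUnion fun j _ => (hFfin j).union (P.isolatingCuts_finite j),
    fun k k' hkk' => biUnion_subset_biUnion_left (Iic_subset_Iic.2 hkk'), ?_, ?_,
    fun k z hz => mem_biUnion self_mem_Iic (Or.inr hz)⟩
  · intro k g hg
    obtain ⟨j, hj, hg | hg⟩ := mem_iUnion₂.1 hg
    · exact (hFad j g hg).mono _ hj
    · exact (P.isAdmissibleCut_of_mem_isolatingCuts hg).mono _ hj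
  · intro ε hε
    obtain ⟨K, hK⟩ := exists_pow_lt_of_lt_one (show 0 < min (κ / 2) (κ * ε / 4) by positivity) hR1
    refine ⟨K, fun k hk x hx y hy hxy => ?_⟩
    have hRk : R ^ k < min (κ / 2) (κ * ε / 4) :=
      (pow_le_pow_of_le_one hR0.le hR1.le hk).trans_lt hK
    have h1 : 2 * R ^ k / κ ≤ 1 := by
      rw [div_le_one hκ]; linarith [min_le_left (κ / 2) (κ * ε / 4)]
    have h2 : 2 * (2 * R ^ k / κ) < ε := by
      rw [← mul_div_assoc, div_lt_iff₀ hκ]; linarith [min_le_right (κ / 2) (κ * ε / 4)]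
    obtain ⟨z, hz, hxz, hzx⟩ := hFnet k h1 x (P.S.subset_Icc P.contraction hx)
    exact ⟨z, mem_biUnion self_mem_Iic (Or.inl hz), hxz, by linarith⟩

end TouchingSetup

/-- there is a convergent partition sequence `{𝒯_k}` of `T` with
`𝒞_k ⊆ 𝒯_k` for all `k ≥ 1`. -/
theorem exists_convergent_partition_sequence {n : ℕ} {ρ : ℕ → ℝ}
    (hρ : ContractionVec n ρ) (S : TouchingIFS n ρ) (α β i₀ : ℕ)
    (hα : S.alphaRun α) (hβ : S.betaRun β) (hi₀ : S.touch i₀)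
    (hρ1n : ρ (n - 1) ≤ ρ 0) (τ : ℕ → ℕ) (hτ : tauSpec ρ n τ) :
    ∃ 𝒯 : ℕ → Set (Set ℝ),
      (∀ k, 1 ≤ k → (𝒯 k).Finite ∧ (∀ A ∈ 𝒯 k, IsCompact A ∧ A ⊆ S.T) ∧
        ⋃₀ 𝒯 k = S.T ∧ ∀ A ∈ 𝒯 k, ∀ B ∈ 𝒯 k, A ≠ B → A ∩ B = ∅) ∧
      (∀ k, 1 ≤ k → ∀ B ∈ 𝒯 (k + 1), ∃ A ∈ 𝒯 k, B ⊆ A) ∧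
      (∀ ε : ℝ, 0 < ε → ∃ K : ℕ, ∀ k, K ≤ k → ∀ A ∈ 𝒯 k, Metric.diam A ≤ ε) ∧
      (∀ k, 1 ≤ k → ∀ (w : List ℕ) (m : ℕ), (∀ a ∈ w, a < n) → 1 ≤ m →
        w.length + m = k → affWord ρ S.t w '' Cset S α β i₀ τ m ∈ 𝒯 k) := by
  let P : TouchingSetup n ρ := ⟨S, α, β, i₀, τ, hρ, hα, hβ, hi₀, hρ1n, hτ⟩
  obtain ⟨G, hfin, hmono, hadm, hmesh, hcuts⟩ := P.exists_cutSequence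
  refine ⟨fun k => cutPartition (G k) S.T, fun k _ => ⟨cutPartition_finite (hfin k), ?_,
    sUnion_cutPartition, fun A hA B hB => inter_eq_empty_of_mem_cutPartition hA hB⟩,
    fun k _ B hB => exists_superset_of_mem_cutPartition (hmono k.le_succ) hB, fun ε hε => ?_,
    fun k _ w m hw hm hk => ?_⟩
  · exact fun A hA => ⟨isCompact_of_mem_cutPartition S.compactT (fun g hg => (hadm k g hg).1) hA,
      subset_of_mem_cutPartition hA⟩
  · obtain ⟨K, hK⟩ := hmesh ε hε
    exact ⟨K, fun k hk A hA => diam_le_of_mem_cutPartition hε.le (hK k hk) hA⟩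
  · subst hk
    exact P.piece_mem_cutPartition hw hm (hcuts _ ⟨w, m, hw, hm, rfl, Or.inl rfl⟩)
      (hcuts _ ⟨w, m, hw, hm, rfl, Or.inr rfl⟩) (hadm _)
end
end

section
/- Let (ρ₁,ρ₂,ρ₃) be a contraction vector with the touching IFS Ψ₁(x)=ρ₁x, Ψ₂(x)=ρ₂x+(1−ρ₂−ρ₃), Ψ₃(x)=ρ₃x+(1−ρ₃) (so intervals 2 and 3 touch). If log ρ₁ / log ρ₃ ∈ ℚ, then the touching letter 2 is right substitutable: there exist a word j ending in the letter 1 and k,k' ∈ ℕ with ρ₂·ρ₃^k = ρ₃·ρ₃^{k'}·ρ_j. -/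
noncomputable section

open Set Metric MeasureTheory

variable {n : ℕ} {ρ : ℕ → ℝ}

/-- Example 1.1: for the three-branch touching IFS, if
`log ρ₁ / log ρ₃ ∈ ℚ` then the touching letter 2 is right substitutable:
there exist a word `j` ending in the letter 1 and `k, k' ∈ ℕ` with
`ρ₂ ρ₃^k = ρ₃ ρ₃^{k'} ρ_j`. -/
theorem three_branch_right_substitutable (r1 r2 r3 : ℝ)
    (h1 : 0 < r1) (h1' : r1 < 1) (h2 : 0 < r2) (h2' : r2 < 1)
    (h3 : 0 < r3) (h3' : r3 < 1) (hsum : r1 + r2 + r3 < 1)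
    (hlog : ∃ q : ℚ, Real.log r1 / Real.log r3 = (q : ℝ)) :
    ∃ (w : List (Fin 3)) (k k' : ℕ),
      r2 * r3 ^ k = r3 * r3 ^ k' * ((w ++ [(0 : Fin 3)]).map ![r1, r2, r3]).prod := by
  obtain ⟨q, hq⟩ := hlog
  have hl1 : Real.log r1 < 0 := Real.log_neg h1 h1'
  have hl3 : Real.log r3 < 0 := Real.log_neg h3 h3'
  have hqpos : (0 : ℝ) < (q : ℝ) := by
    rw [← hq]; exact div_pos_of_neg_of_neg hl1 hl3
  have hqpos' : 0 < q := by exact_mod_cast hqpos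
  set a : ℕ := q.num.toNat with ha
  set b : ℕ := q.den with hb
  have hbpos : 0 < b := q.pos
  have hnum : ((q.num : ℝ)) = (a : ℝ) := by
    rw [ha]
    exact_mod_cast (Int.toNat_of_nonneg (le_of_lt (Rat.num_pos.mpr hqpos'))).symm
  have hq' : Real.log r1 = (q : ℝ) * Real.log r3 := by
    field_simp [ne_of_lt hl3] at hq
    linarith [hq]
  have hkey : r1 ^ b = r3 ^ a := by
    have hlog_eq : (b : ℝ) * Real.log r1 = (a : ℝ) * Real.log r3 := by
      rw [hq', Rat.cast_def, hnum]
      have hbne : ((b : ℝ)) ≠ 0 := by positivity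
      rw [← hb]
      field_simp
    have e1 : Real.log (r1 ^ b) = Real.log (r3 ^ a) := by
      rw [Real.log_pow, Real.log_pow]; exact_mod_cast hlog_eq
    calc r1 ^ b = Real.exp (Real.log (r1 ^ b)) := (Real.exp_log (by positivity)).symm
      _ = Real.exp (Real.log (r3 ^ a)) := by rw [e1]
      _ = r3 ^ a := Real.exp_log (by positivity)
  refine ⟨(1 : Fin 3) :: List.replicate (b - 1) (0 : Fin 3), a + 1, 0, ?_⟩
  have hprod : (((1 : Fin 3) :: List.replicate (b - 1) (0 : Fin 3) ++ [(0 : Fin 3)]).map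
      ![r1, r2, r3]).prod = r2 * r1 ^ b := by
    have hb1 : b - 1 + 1 = b := by omega
    simp only [List.cons_append, List.map_cons, List.map_append, List.map_replicate,
      List.prod_cons, List.prod_append, List.prod_replicate, List.prod_nil,
      Matrix.cons_val_one, Matrix.head_cons, Matrix.cons_val_zero]
    simp only [List.map_nil, List.prod_nil, mul_one, ← pow_succ, hb1]
  rw [hprod, hkey]
  ring
end
end

section
/- Suppose {Kᵢ}_{i∈V} and {Kᵢ'}_{i∈V} are dust-like graph-directed sets on the same finite directed graph (V,Γ), satisfying Kᵢ = ⋃_{j∈V} ⋃_{e∈E_{ij}} S_e(K_j) and Kᵢ' = ⋃_{j∈V} ⋃_{e∈E_{ij}} S_e'(K_j') with both unions disjoint, where for each edge e the similarities S_e and S_e' on ℝ^d have the same contraction ratio r_e < 1 along cycles (product of ratios over any cycle < 1). Then Kᵢ and Kᵢ' are Lipschitz equivalent for each i ∈ V. -/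
/-!
Both families are coded by the infinite paths of the graph: a point of `K v` lies in the
nested cylinders `S (a 0) ∘ ⋯ ∘ S (a (m - 1)) '' K (src (a m))` of a path `a` starting at `v`.
If the paths of `x` and `y` first differ at step `m`, then `dist x y` is comparable to
`r (a 0) ⋯ r (a (m - 1))`: from above through the diameters of the `K v`, from below through the
separation of the disjoint first-level pieces. The same holds for `K'` with the same ratios, so
matching points along common paths is bi-Lipschitz. It is well defined because the cycle
condition makes the ratio products decay geometrically along every path: cutting out cycles of
length at most `#V` leaves a factor `θ < 1` for every `#V + 1` steps.
-/

noncomputable section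

open Set Metric MeasureTheory

variable {n : ℕ} {ρ : ℕ → ℝ}

open Filter Topology

theorem lipEquivOn_of_rel {X Y : Type*} [MetricSpace X] [MetricSpace Y] [Nonempty Y]
    {E : Set X} {F : Set Y} (R : X → Y → Prop) (hE : ∀ x ∈ E, ∃ y ∈ F, R x y) (hF : ∀ y ∈ F, ∃ x ∈ E, R x y)
    {C C' : ℝ} (hC' : 0 < C')
    (hle : ∀ x y x' y', R x y → R x' y' → dist y y' ≤ C * dist x x')
    (hge : ∀ x y x' y', R x y → R x' y' → dist x x' ≤ C' * dist y y') :
    LipEquivOn E F := by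
  choose! f hfF hfR using hE
  refine ⟨f, C'⁻¹, max C'⁻¹ C, inv_pos.2 hC', le_max_left _ _, ⟨hfF, ?_, ?_⟩, ?_⟩
  · intro x hx x' hx' hfx
    have := hge x (f x) x' (f x') (hfR x hx) (hfR x' hx')
    rw [hfx, dist_self, mul_zero] at this
    exact dist_le_zero.1 this
  · intro y hy
    obtain ⟨x, hx, hxy⟩ := hF y hy
    refine ⟨x, hx, dist_le_zero.1 ?_⟩
    simpa using hle x (f x) x y (hfR x hx) hxy
  · intro x hx x' hx'
    have hR := hfR x hx
    have hR' := hfR x' hx'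
    constructor
    · rw [inv_mul_le_iff₀ hC']
      exact hge x (f x) x' (f x') hR hR'
    · exact (hle x (f x) x' (f x') hR hR').trans
        (mul_le_mul_of_nonneg_right (le_max_right _ _) dist_nonneg)

section GraphPaths

variable {V ι : Type*} {src tgt : ι → V} {r : ι → ℝ} {a b : ℕ → ι}

def IsPath (src tgt : ι → V) (a : ℕ → ι) : Prop := ∀ k, tgt (a k) = src (a (k + 1))

def pathRatio (r : ι → ℝ) (a : ℕ → ι) (m : ℕ) : ℝ := ∏ k ∈ Finset.range m, r (a k)

theorem pathRatio_nonneg (hr : ∀ e, 0 ≤ r e) (a : ℕ → ι) (m : ℕ) : 0 ≤ pathRatio r a m :=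
  Finset.prod_nonneg fun k _ => hr (a k)

theorem IsPath.src_eq_of_eqOn (ha : IsPath src tgt a) (hb : IsPath src tgt b)
    (h0 : src (a 0) = src (b 0)) {m : ℕ} (h : ∀ k < m, a k = b k) : src (a m) = src (b m) := by
  cases m with
  | zero => exact h0
  | succ m => rw [← ha m, ← hb m, h m m.lt_succ_self]

theorem pathRatio_eq_prod_map_range (r : ι → ℝ) (a : ℕ → ι) (m : ℕ) :
    pathRatio r a m = (((List.range m).map a).map r).prod := by
  induction m with
  | zero => rfl
  | succ m ih => rw [pathRatio, Finset.prod_range_succ, ← pathRatio, ih, List.map_map,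
      List.map_map, List.prod_range_succ, Function.comp_apply]

theorem IsPath.pathRatio_lt_one
    (hcycle : ∀ (e : ι) (es : List ι), List.Chain (fun a b => tgt a = src b) e es →
      tgt ((e :: es).getLast (List.cons_ne_nil _ _)) = src e →
      ((e :: es).map r).prod < 1)
    (ha : IsPath src tgt a) {ℓ : ℕ} (hℓ : 0 < ℓ) (hclosed : src (a ℓ) = src (a 0)) :
    pathRatio r a ℓ < 1 := by
  obtain ⟨m, rfl⟩ := Nat.exists_eq_add_one_of_ne_zero hℓ.ne'
  have hlist : (List.range (m + 1)).map a = a 0 :: (List.range m).map (fun k => a (k + 1)) := by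
    simp [List.range_succ_eq_map]
  rw [pathRatio_eq_prod_map_range, hlist]
  refine hcycle _ _ ?_ ?_
  · show List.IsChain _ (a 0 :: _)
    rw [← hlist, List.isChain_map, List.isChain_range_succ]
    exact fun k _ => ha k
  · simp_rw [← hlist, List.getLast_map, List.getLast_range]
    rw [Nat.add_sub_cancel, ha m]
    exact hclosed

def dropSegment (a : ℕ → ι) (i ℓ : ℕ) : ℕ → ι := fun k => if k < i then a k else a (k + ℓ)

theorem IsPath.dropSegment (ha : IsPath src tgt a) {i ℓ : ℕ}
    (hclosed : src (a (i + ℓ)) = src (a i)) : IsPath src tgt (dropSegment a i ℓ) := by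
  intro k
  simp only [_root_.dropSegment]
  rcases lt_trichotomy (k + 1) i with hk | rfl | hk
  · rw [if_pos (by omega), if_pos hk, ha k]
  · rw [if_pos k.lt_succ_self, if_neg (lt_irrefl _), ha k, hclosed]
  · rw [if_neg (by omega), if_neg (by omega), ha, Nat.add_right_comm]

theorem pathRatio_dropSegment (r : ι → ℝ) (a : ℕ → ι) {i m : ℕ} (hi : i ≤ m) (ℓ : ℕ) :
    pathRatio r a (m + ℓ) =
      pathRatio r (fun k => a (i + k)) ℓ * pathRatio r (dropSegment a i ℓ) m := by
  obtain ⟨m, rfl⟩ := Nat.exists_eq_add_of_le hi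
  have hhead : ∀ k ∈ Finset.range i, r (dropSegment a i ℓ k) = r (a k) := fun k hk => by
    rw [dropSegment, if_pos (Finset.mem_range.1 hk)]
  have htail : ∀ k ∈ Finset.range m, r (dropSegment a i ℓ (i + k)) = r (a (i + ℓ + k)) :=
    fun k _ => by rw [dropSegment, if_neg (by omega), Nat.add_right_comm]
  simp only [pathRatio]
  rw [Nat.add_right_comm, Finset.prod_range_add, Finset.prod_range_add, Finset.prod_range_add,
    Finset.prod_congr rfl hhead, Finset.prod_congr rfl htail]
  ring

theorem exists_pathRatio_closed_le [Finite ι] (N : ℕ)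
    (hcyc : ∀ a, IsPath src tgt a → ∀ ℓ, 0 < ℓ → src (a ℓ) = src (a 0) → pathRatio r a ℓ < 1) :
    ∃ θ : ℝ, 0 ≤ θ ∧ θ < 1 ∧ ∀ a, IsPath src tgt a → ∀ ℓ, 0 < ℓ → ℓ ≤ N →
      src (a ℓ) = src (a 0) → pathRatio r a ℓ ≤ θ := by
  set s : Set ℝ := {x | ∃ a, IsPath src tgt a ∧ ∃ ℓ, 0 < ℓ ∧ ℓ ≤ N ∧
    src (a ℓ) = src (a 0) ∧ pathRatio r a ℓ = x}
  have hs : s.Finite := by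
    refine ((List.finite_length_le ι N).image fun l => (l.map r).prod).subset ?_
    rintro _ ⟨a, -, ℓ, -, hℓN, -, rfl⟩
    exact ⟨(List.range ℓ).map a, by simpa using hℓN, (pathRatio_eq_prod_map_range r a ℓ).symm⟩
  have hlt : ∀ x ∈ s, x < 1 := by
    rintro _ ⟨a, ha, ℓ, hℓ, -, hclosed, rfl⟩
    exact hcyc a ha ℓ hℓ hclosed
  have hpos : ∀ᶠ θ in 𝓝[<] (1 : ℝ), θ ∈ Ioo 0 1 := Ioo_mem_nhdsLT zero_lt_one
  have habove : ∀ᶠ θ in 𝓝[<] (1 : ℝ), ∀ x ∈ s, x ≤ θ :=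
    (eventually_all_finite hs).2 fun x hx =>
      mem_of_superset (Ioo_mem_nhdsLT (hlt x hx)) fun θ h => h.1.le
  obtain ⟨θ, ⟨hθ0, hθ1⟩, hθs⟩ := (hpos.and habove).exists
  exact ⟨θ, hθ0.le, hθ1, fun a ha ℓ hℓ hℓN hclosed => hθs _ ⟨a, ha, ℓ, hℓ, hℓN, hclosed, rfl⟩⟩

theorem exists_lt_le_src_eq [Fintype V] (a : ℕ → ι) :
    ∃ i j, i < j ∧ j ≤ Fintype.card V ∧ src (a j) = src (a i) := by
  obtain ⟨i, j, hij, heq⟩ := Fintype.exists_ne_map_eq_of_card_lt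
    (fun k : Fin (Fintype.card V + 1) => src (a k)) (by simp)
  rcases lt_or_gt_of_ne hij with h | h
  · exact ⟨i, j, h, Nat.le_of_lt_succ j.isLt, heq.symm⟩
  · exact ⟨j, i, h, Nat.le_of_lt_succ i.isLt, heq⟩

theorem exists_pathRatio_le [Fintype V] [Finite ι] (hr : ∀ e, 0 ≤ r e)
    (hcyc : ∀ a, IsPath src tgt a → ∀ ℓ, 0 < ℓ → src (a ℓ) = src (a 0) → pathRatio r a ℓ < 1) :
    ∃ C θ : ℝ, 0 ≤ θ ∧ θ < 1 ∧ ∀ a, IsPath src tgt a → ∀ m,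
      pathRatio r a m ≤ C * θ ^ (m / (Fintype.card V + 1)) := by
  set N := Fintype.card V with hN
  obtain ⟨θ, hθ0, hθ1, hθ⟩ := exists_pathRatio_closed_le N hcyc
  obtain ⟨M, hM⟩ := (Set.finite_range r).bddAbove
  have hM1 : 1 ≤ max M 1 := le_max_right _ _
  refine ⟨max M 1 ^ N, θ, hθ0, hθ1, fun a ha m => ?_⟩
  induction m using Nat.strong_induction_on generalizing a with
  | _ m ih =>
  by_cases hmN : m ≤ N
  · rw [Nat.div_eq_of_lt (Nat.lt_succ_of_le hmN), pow_zero, mul_one]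
    calc pathRatio r a m ≤ ∏ _k ∈ Finset.range m, max M 1 :=
          Finset.prod_le_prod (fun k _ => hr (a k))
            fun k _ => (hM ⟨a k, rfl⟩).trans (le_max_left _ _)
      _ ≤ max M 1 ^ N := by
          rw [Finset.prod_const, Finset.card_range]
          exact pow_le_pow_right₀ hM1 hmN
  · obtain ⟨i, j, hij, hjN, hclosed⟩ := exists_lt_le_src_eq (src := src) a
    rw [← hN] at hjN
    obtain ⟨ℓ, rfl⟩ := Nat.exists_eq_add_of_le hij.le
    obtain ⟨m', rfl⟩ : ∃ m', m = m' + ℓ := ⟨m - ℓ, by omega⟩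
    have hcycle : pathRatio r (fun k => a (i + k)) ℓ ≤ θ :=
      hθ _ (fun k => ha (i + k)) ℓ (by omega) (by omega) hclosed
    have hrest := ih m' (by omega) _ (ha.dropSegment hclosed)
    have hdiv : (m' + ℓ) / (N + 1) ≤ m' / (N + 1) + 1 :=
      (Nat.div_le_div_right (by omega)).trans_eq (Nat.add_div_right m' N.succ_pos)
    calc pathRatio r a (m' + ℓ)
        = pathRatio r (fun k => a (i + k)) ℓ * pathRatio r (dropSegment a i ℓ) m' :=
          pathRatio_dropSegment r a (by omega) ℓ
      _ ≤ θ * (max M 1 ^ N * θ ^ (m' / (N + 1))) :=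
          mul_le_mul hcycle hrest (pathRatio_nonneg hr _ _) hθ0
      _ = max M 1 ^ N * θ ^ (m' / (N + 1) + 1) := by ring
      _ ≤ max M 1 ^ N * θ ^ ((m' + ℓ) / (N + 1)) :=
          mul_le_mul_of_nonneg_left (pow_le_pow_of_le_one hθ0 hθ1.le hdiv) (by positivity)

theorem IsPath.tendsto_pathRatio [Fintype V] [Finite ι] (hr : ∀ e, 0 ≤ r e)
    (hcyc : ∀ a, IsPath src tgt a → ∀ ℓ, 0 < ℓ → src (a ℓ) = src (a 0) → pathRatio r a ℓ < 1)
    (ha : IsPath src tgt a) : Tendsto (pathRatio r a) atTop (𝓝 0) := by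
  obtain ⟨C, θ, hθ0, hθ1, hle⟩ := exists_pathRatio_le hr hcyc
  have hlim : Tendsto (fun m => C * θ ^ (m / (Fintype.card V + 1))) atTop (𝓝 0) := by
    simpa using ((tendsto_pow_atTop_nhds_zero_of_lt_one hθ0 hθ1).comp
      (Nat.tendsto_div_const_atTop (Fintype.card V).succ_ne_zero)).const_mul C
  exact squeeze_zero (pathRatio_nonneg hr a) (hle a ha) hlim

end GraphPaths

def pathMap {X ι : Type*} (S : ι → X → X) (a : ℕ → ι) : ℕ → X → X
  | 0 => id
  | m + 1 => pathMap S a m ∘ S (a m)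

theorem pathMap_congr {X ι : Type*} {S : ι → X → X} {a b : ℕ → ι} {m : ℕ}
    (h : ∀ k < m, a k = b k) : pathMap S a m = pathMap S b m := by
  induction m with
  | zero => rfl
  | succ m ih =>
    simp only [pathMap, h m m.lt_succ_self, ih fun k hk => h k (hk.trans m.lt_succ_self)]

theorem dist_pathMap {X ι : Type*} [MetricSpace X] {S : ι → X → X} {r : ι → ℝ}
    (hS : ∀ e x y, dist (S e x) (S e y) = r e * dist x y) (a : ℕ → ι) (m : ℕ) (x y : X) :
    dist (pathMap S a m x) (pathMap S a m y) = pathRatio r a m * dist x y := by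
  induction m generalizing x y with
  | zero => simp [pathMap, pathRatio]
  | succ m ih =>
    simp only [pathMap, Function.comp_apply, ih, hS, pathRatio, Finset.prod_range_succ]
    ring

structure DustLikeGDS (X : Type*) [MetricSpace X] {V ι : Type*} (src tgt : ι → V)
    (r : ι → ℝ) where
  S : ι → X → X
  K : V → Set X
  ratio_pos : ∀ e, 0 < r e
  dist_map : ∀ e x y, dist (S e x) (S e y) = r e * dist x y
  isCompact : ∀ v, IsCompact (K v)
  nonempty : ∀ v, (K v).Nonempty
  eq_iUnion : ∀ v, K v = ⋃ e ∈ {e | src e = v}, S e '' K (tgt e)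
  disjoint : ∀ e f, src e = src f → e ≠ f → Disjoint (S e '' K (tgt e)) (S f '' K (tgt f))

namespace DustLikeGDS

variable {X Y : Type*} [MetricSpace X] [MetricSpace Y] {V ι : Type*} {src tgt : ι → V}
  {r : ι → ℝ} (G : DustLikeGDS X src tgt r) (G' : DustLikeGDS Y src tgt r)
  {a b : ℕ → ι} {v : V} {x y : X}

def cylinder (a : ℕ → ι) (m : ℕ) : Set X := pathMap G.S a m '' G.K (src (a m))

def HasAddress (a : ℕ → ι) (x : X) : Prop := ∀ m, x ∈ G.cylinder a m

theorem continuous_S (e : ι) : Continuous (G.S e) :=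
  (LipschitzWith.of_dist_le_mul (K := (r e).toNNReal) fun x y => by
    rw [G.dist_map, Real.coe_toNNReal _ (G.ratio_pos e).le]).continuous

theorem continuous_pathMap (a : ℕ → ι) (m : ℕ) : Continuous (pathMap G.S a m) := by
  induction m with
  | zero => exact continuous_id
  | succ m ih => exact ih.comp (G.continuous_S (a m))

theorem image_subset (e : ι) : G.S e '' G.K (tgt e) ⊆ G.K (src e) := by
  rw [G.eq_iUnion (src e)]
  exact subset_biUnion_of_mem (u := fun f => G.S f '' G.K (tgt f)) rfl

theorem cylinder_succ (ha : IsPath src tgt a) (m : ℕ) :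
    G.cylinder a (m + 1) = pathMap G.S a m '' (G.S (a m) '' G.K (tgt (a m))) := by
  rw [cylinder, pathMap, image_comp, ha m]

theorem cylinder_succ_subset (ha : IsPath src tgt a) (m : ℕ) :
    G.cylinder a (m + 1) ⊆ G.cylinder a m := by
  rw [G.cylinder_succ ha]
  exact image_mono (G.image_subset _)

theorem cylinder_congr (ha : IsPath src tgt a) (hb : IsPath src tgt b)
    (h0 : src (a 0) = src (b 0)) {m : ℕ} (h : ∀ k < m, a k = b k) :
    G.cylinder a m = G.cylinder b m := by
  rw [cylinder, cylinder, pathMap_congr h, ha.src_eq_of_eqOn hb h0 h]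

theorem mem_of_hasAddress (hx : G.HasAddress a x) : x ∈ G.K (src (a 0)) := by
  simpa [cylinder, pathMap] using hx 0

theorem exists_hasAddress_of_isPath (ha : IsPath src tgt a) : ∃ x, G.HasAddress a x := by
  obtain ⟨x, hx⟩ := IsCompact.nonempty_iInter_of_sequence_nonempty_isCompact_isClosed
    (G.cylinder a) (G.cylinder_succ_subset ha) (fun m => (G.nonempty _).image _)
    ((G.isCompact _).image (G.continuous_pathMap a 0))
    fun m => ((G.isCompact _).image (G.continuous_pathMap a m)).isClosed
  exact ⟨x, mem_iInter.1 hx⟩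

theorem exists_hasAddress_of_mem (hx : x ∈ G.K v) :
    ∃ a, src (a 0) = v ∧ IsPath src tgt a ∧ G.HasAddress a x := by
  have hstep : ∀ p : {p : V × X // p.2 ∈ G.K p.1}, ∃ e, ∃ q : {p : V × X // p.2 ∈ G.K p.1},
      src e = p.1.1 ∧ tgt e = q.1.1 ∧ G.S e q.1.2 = p.1.2 := by
    rintro ⟨⟨w, z⟩, hz⟩
    rw [G.eq_iUnion w] at hz
    obtain ⟨e, he, hz⟩ := mem_iUnion₂.1 hz
    obtain ⟨y, hy, rfl⟩ := hz
    exact ⟨e, ⟨(tgt e, y), hy⟩, he, rfl, rfl⟩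
  choose edge next hsrc htgt hmap using hstep
  set p : ℕ → {p : V × X // p.2 ∈ G.K p.1} := fun k => next^[k] ⟨(v, x), hx⟩
  have hp : ∀ k, p (k + 1) = next (p k) := fun k => Function.iterate_succ_apply' _ _ _
  have hpoint : ∀ m, pathMap G.S (fun k => edge (p k)) m (p m).1.2 = x := by
    intro m
    induction m with
    | zero => rfl
    | succ m ih => rw [pathMap, Function.comp_apply, hp, hmap, ← ih]
  refine ⟨fun k => edge (p k), hsrc _, fun k => by rw [htgt, hsrc, hp], fun m => ?_⟩
  exact ⟨(p m).1.2, by rw [hsrc]; exact (p m).2, hpoint m⟩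

theorem exists_dist_le_of_mem_cylinder [Finite V] :
    ∃ D > 0, ∀ a m, ∀ x ∈ G.cylinder a m, ∀ y ∈ G.cylinder a m,
      dist x y ≤ pathRatio r a m * D := by
  obtain ⟨D, hD⟩ := (Set.finite_range fun v => diam (G.K v)).bddAbove
  refine ⟨max D 1, by positivity, ?_⟩
  rintro a m _ ⟨p, hp, rfl⟩ _ ⟨q, hq, rfl⟩
  rw [dist_pathMap G.dist_map]
  refine mul_le_mul_of_nonneg_left ?_ (pathRatio_nonneg (fun e => (G.ratio_pos e).le) a m)
  exact (dist_le_diam_of_mem (G.isCompact _).isBounded hp hq).trans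
    ((hD ⟨_, rfl⟩).trans (le_max_left _ _))

theorem eq_of_hasAddress [Finite V] (hdecay : Tendsto (pathRatio r a) atTop (𝓝 0))
    (hx : G.HasAddress a x) (hy : G.HasAddress a y) : x = y := by
  obtain ⟨D, -, hD⟩ := G.exists_dist_le_of_mem_cylinder
  have hlim : Tendsto (fun m => pathRatio r a m * D) atTop (𝓝 0) := by
    simpa using hdecay.mul_const D
  exact dist_le_zero.1 (ge_of_tendsto' hlim fun m => hD a m x (hx m) y (hy m))

theorem exists_separation [Finite ι] :
    ∃ δ > 0, ∀ e f, src e = src f → e ≠ f →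
      ∀ p ∈ G.S e '' G.K (tgt e), ∀ q ∈ G.S f '' G.K (tgt f), δ ≤ dist p q := by
  have hcompact : ∀ e, IsCompact (G.S e '' G.K (tgt e)) := fun e =>
    (G.isCompact _).image (G.continuous_S e)
  have hpair : ∀ ef : ι × ι, ∀ᶠ δ in 𝓝[>] (0 : ℝ), src ef.1 = src ef.2 → ef.1 ≠ ef.2 →
      ∀ p ∈ G.S ef.1 '' G.K (tgt ef.1), ∀ q ∈ G.S ef.2 '' G.K (tgt ef.2), δ ≤ dist p q := by
    rintro ⟨e, f⟩
    by_cases hef : src e = src f ∧ e ≠ f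
    · obtain ⟨δ, hδ, hsep⟩ := exists_pos_forall_lt_edist (hcompact e) (hcompact f).isClosed
        (G.disjoint e f hef.1 hef.2)
      refine mem_of_superset (Ioo_mem_nhdsGT (NNReal.coe_pos.2 hδ)) fun ε hε _ _ p hp q hq => ?_
      have := hsep p hp q hq
      rw [edist_dist, ← ENNReal.ofReal_coe_nnreal, ENNReal.ofReal_lt_ofReal_iff_of_nonneg
        δ.coe_nonneg] at this
      exact hε.2.le.trans this.le
    · exact Eventually.of_forall fun δ h h' => absurd ⟨h, h'⟩ hef
  obtain ⟨δ, hδ, hsep⟩ := ((eventually_all.2 hpair).and self_mem_nhdsWithin).exists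
  exact ⟨δ, hsep, fun e f => hδ (e, f)⟩

theorem exists_pathRatio_mul_le_dist [Finite ι] :
    ∃ δ > 0, ∀ a b, IsPath src tgt a → IsPath src tgt b → src (a 0) = src (b 0) →
      ∀ m, (∀ k < m, a k = b k) → a m ≠ b m →
      ∀ x y, G.HasAddress a x → G.HasAddress b y → pathRatio r a m * δ ≤ dist x y := by
  obtain ⟨δ, hδ, hsep⟩ := G.exists_separation
  refine ⟨δ, hδ, fun a b ha hb h0 m hagree hne x y hx hy => ?_⟩
  obtain ⟨p, hp, rfl⟩ : x ∈ _ := G.cylinder_succ ha m ▸ hx (m + 1)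
  obtain ⟨q, hq, rfl⟩ : y ∈ _ := G.cylinder_succ hb m ▸ hy (m + 1)
  rw [← pathMap_congr hagree, dist_pathMap G.dist_map]
  exact mul_le_mul_of_nonneg_left (hsep _ _ (ha.src_eq_of_eqOn hb h0 hagree) hne p hp q hq)
    (pathRatio_nonneg (fun e => (G.ratio_pos e).le) a m)

def SameAddress (v : V) (x : X) (y : Y) : Prop :=
  ∃ a, src (a 0) = v ∧ IsPath src tgt a ∧ G.HasAddress a x ∧ G'.HasAddress a y

variable {G G'} in
theorem SameAddress.symm {y : Y} (h : SameAddress G G' v x y) : SameAddress G' G v y x :=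
  let ⟨a, ha0, ha, hx, hy⟩ := h
  ⟨a, ha0, ha, hy, hx⟩

theorem exists_sameAddress (hx : x ∈ G.K v) : ∃ y ∈ G'.K v, SameAddress G G' v x y := by
  obtain ⟨a, ha0, ha, hxa⟩ := G.exists_hasAddress_of_mem hx
  obtain ⟨y, hya⟩ := G'.exists_hasAddress_of_isPath ha
  exact ⟨y, ha0 ▸ G'.mem_of_hasAddress hya, a, ha0, ha, hxa, hya⟩

theorem exists_dist_le_mul_of_sameAddress [Finite V] [Finite ι]
    (hdecay : ∀ a, IsPath src tgt a → Tendsto (pathRatio r a) atTop (𝓝 0)) :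
    ∃ C > 0, ∀ v x y x' y', SameAddress G G' v x y → SameAddress G G' v x' y' →
      dist y y' ≤ C * dist x x' := by
  obtain ⟨δ, hδ, hsep⟩ := G.exists_pathRatio_mul_le_dist
  obtain ⟨D, hD, hdiam⟩ := G'.exists_dist_le_of_mem_cylinder
  refine ⟨D / δ, div_pos hD hδ, ?_⟩
  rintro v x y x' y' ⟨a, ha0, ha, hxa, hya⟩ ⟨b, hb0, hb, hxb, hyb⟩
  rcases eq_or_ne a b with rfl | hab
  · rw [G'.eq_of_hasAddress (hdecay a ha) hya hyb, dist_self]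
    positivity
  set m := PiNat.firstDiff a b
  have hagree : ∀ k < m, a k = b k := fun k hk => PiNat.apply_eq_of_lt_firstDiff hk
  have h0 : src (a 0) = src (b 0) := ha0.trans hb0.symm
  have hy' : y' ∈ G'.cylinder a m := G'.cylinder_congr ha hb h0 hagree ▸ hyb m
  calc dist y y' ≤ pathRatio r a m * D := hdiam a m y (hya m) y' hy'
    _ = D / δ * (pathRatio r a m * δ) := by field_simp
    _ ≤ D / δ * dist x x' := mul_le_mul_of_nonneg_left
        (hsep a b ha hb h0 m hagree (PiNat.apply_firstDiff_ne hab) x x' hxa hxb) (by positivity)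

theorem lipEquivOn [Finite V] [Finite ι]
    (hdecay : ∀ a, IsPath src tgt a → Tendsto (pathRatio r a) atTop (𝓝 0)) (v : V) :
    LipEquivOn (G.K v) (G'.K v) := by
  have : Nonempty Y := ⟨(G'.nonempty v).some⟩
  obtain ⟨C, -, hC⟩ := exists_dist_le_mul_of_sameAddress G G' hdecay
  obtain ⟨C', hC'pos, hC'⟩ := exists_dist_le_mul_of_sameAddress G' G hdecay
  exact lipEquivOn_of_rel (SameAddress G G' v) (fun x hx => G.exists_sameAddress G' hx)
    (fun y hy => (G'.exists_sameAddress G hy).imp fun x hx => ⟨hx.1, hx.2.symm⟩)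
    hC'pos (hC v) fun x y x' y' h h' => hC' v y x y' x' h.symm h'.symm

end DustLikeGDS

theorem graph_directed_lipEquiv_general {d : ℕ} {V ι : Type} [Fintype V] [Fintype ι]
    (src tgt : ι → V) (r : ι → ℝ)
    (S S' : ι → EuclideanSpace ℝ (Fin d) → EuclideanSpace ℝ (Fin d))
    (hr : ∀ e, 0 < r e)
    (hS : ∀ e x y, dist (S e x) (S e y) = r e * dist x y)
    (hS' : ∀ e x y, dist (S' e x) (S' e y) = r e * dist x y)
    (hcycle : ∀ (e : ι) (es : List ι), List.Chain (fun a b => tgt a = src b) e es →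
      tgt ((e :: es).getLast (List.cons_ne_nil _ _)) = src e →
      ((e :: es).map r).prod < 1)
    (K K' : V → Set (EuclideanSpace ℝ (Fin d)))
    (hKc : ∀ v, IsCompact (K v)) (hKne : ∀ v, (K v).Nonempty)
    (hK'c : ∀ v, IsCompact (K' v)) (hK'ne : ∀ v, (K' v).Nonempty)
    (hKeq : ∀ v, K v = ⋃ e ∈ {e | src e = v}, S e '' K (tgt e))
    (hK'eq : ∀ v, K' v = ⋃ e ∈ {e | src e = v}, S' e '' K' (tgt e))
    (hKdisj : ∀ e f, src e = src f → e ≠ f → (S e '' K (tgt e)) ∩ (S f '' K (tgt f)) = ∅)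
    (hK'disj : ∀ e f, src e = src f → e ≠ f →
      (S' e '' K' (tgt e)) ∩ (S' f '' K' (tgt f)) = ∅) :
    ∀ v, LipEquivOn (K v) (K' v) := by
  let G : DustLikeGDS _ src tgt r := ⟨S, K, hr, hS, hKc, hKne, hKeq,
    fun e f h hne => disjoint_iff_inter_eq_empty.2 (hKdisj e f h hne)⟩
  let G' : DustLikeGDS _ src tgt r := ⟨S', K', hr, hS', hK'c, hK'ne, hK'eq,
    fun e f h hne => disjoint_iff_inter_eq_empty.2 (hK'disj e f h hne)⟩
  have hcyc : ∀ a, IsPath src tgt a → ∀ ℓ, 0 < ℓ → src (a ℓ) = src (a 0) → pathRatio r a ℓ < 1 :=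
    fun a ha ℓ hℓ hclosed => ha.pathRatio_lt_one hcycle hℓ hclosed
  exact G.lipEquivOn G' fun a ha => ha.tendsto_pathRatio (fun e => (hr e).le) hcyc

/-- Lemma 3.1: dust-like graph-directed sets on the same graph whose
corresponding similarities have the same contraction ratios are Lipschitz equivalent. -/
theorem graph_directed_lipEquiv {d : ℕ} {V ι : Type} [Fintype V] [Fintype ι]
    (src tgt : ι → V) (r : ι → ℝ)
    (S S' : ι → EuclideanSpace ℝ (Fin d) → EuclideanSpace ℝ (Fin d))
    (hr : ∀ e, 0 < r e)
    (hS : ∀ e x y, dist (S e x) (S e y) = r e * dist x y)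
    (hS' : ∀ e x y, dist (S' e x) (S' e y) = r e * dist x y)
    (hout : ∀ v : V, ∃ e, src e = v)
    (hcycle : ∀ (e : ι) (es : List ι), List.Chain (fun a b => tgt a = src b) e es →
      tgt ((e :: es).getLast (List.cons_ne_nil _ _)) = src e →
      ((e :: es).map r).prod < 1)
    (K K' : V → Set (EuclideanSpace ℝ (Fin d)))
    (hKc : ∀ v, IsCompact (K v)) (hKne : ∀ v, (K v).Nonempty)
    (hK'c : ∀ v, IsCompact (K' v)) (hK'ne : ∀ v, (K' v).Nonempty)
    (hKeq : ∀ v, K v = ⋃ e ∈ {e | src e = v}, S e '' K (tgt e))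
    (hK'eq : ∀ v, K' v = ⋃ e ∈ {e | src e = v}, S' e '' K' (tgt e))
    (hKdisj : ∀ e f, src e = src f → e ≠ f → (S e '' K (tgt e)) ∩ (S f '' K (tgt f)) = ∅)
    (hK'disj : ∀ e f, src e = src f → e ≠ f →
      (S' e '' K' (tgt e)) ∩ (S' f '' K' (tgt f)) = ∅) :
    ∀ v, LipEquivOn (K v) (K' v) :=
  graph_directed_lipEquiv_general src tgt r S S' hr hS hS' hcycle K K' hKc hKne hK'c hK'ne hKeq
    hK'eq hKdisj hK'disj
end
end

section
/- Let E be a compact subset of ℝ and {A₁,…,A_k} a family of compact subsets of E such that each Aᵢ is E-separate (d(Aᵢ, E∖Aᵢ) > 0), CH(Aᵢ) ∩ E = Aᵢ for all i, and the convex hulls CH(Aᵢ) are pairwise disjoint. Then there exists a unique family 𝒮 of compact subsets of E of minimal cardinality such that: ⋃_{B∈𝒮} B = E; CH(B) ∩ CH(B') = ∅ for distinct B,B' ∈ 𝒮; and Aᵢ ∈ 𝒮 for all i. Moreover it satisfies the containing property: if B ⊆ E and CH(B) ∩ ⋃ᵢAᵢ = ∅, then there is a unique F ∈ 𝒮 with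 B ⊆ F. -/
/-! Sort the points of `E` outside `⋃ A i` by the set of indices `i` with `A i` to their left;
call each class a piece. Since the `A i` are relatively open in `E`, each piece is compact, and no
`A i` meets the hull of a piece, so the `A i` together with the nonempty pieces are an admissible
family. Conversely, a member of any admissible family that is not one of the `A i` avoids every
`A i`, so its hull contains no right end point `sSup (A i)` and it lies inside one piece. Thus every
admissible family refines ours, and a covering refinement of a family of disjoint nonempty sets
has at least as many members, with equality only for the family itself. The containing property
is the same argument applied to `B`. -/

noncomputable section

open Set Metric MeasureTheory

variable {n : ℕ} {ρ : ℕ → ℝ}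

section Refinement

open Finset

variable {α : Type*} {𝒮 𝒮' : Finset (Set α)}

theorem exists_injOn_subset_of_refines (hne : ∀ B ∈ 𝒮, B.Nonempty)
    (hdisj : (𝒮 : Set (Set α)).PairwiseDisjoint id)
    (hcover : (⋃ B ∈ 𝒮, B) ⊆ ⋃ F ∈ 𝒮', F)
    (href : ∀ F ∈ 𝒮', F.Nonempty → ∃ B ∈ 𝒮, F ⊆ B) :
    ∃ φ : Set α → Set α, Set.MapsTo φ 𝒮 𝒮' ∧ Set.InjOn φ 𝒮 ∧ ∀ B ∈ 𝒮, φ B ⊆ B := by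
  have hsub : ∀ B ∈ 𝒮, ∃ F ∈ 𝒮', F.Nonempty ∧ F ⊆ B := by
    intro B hB
    obtain ⟨x, hx⟩ := hne B hB
    obtain ⟨F, hF, hxF⟩ := mem_iUnion₂.1 (hcover (mem_iUnion₂.2 ⟨B, hB, hx⟩))
    obtain ⟨C, hC, hFC⟩ := href F hF ⟨x, hxF⟩
    obtain rfl : C = B := hdisj.elim_set hC hB x (hFC hxF) hx
    exact ⟨F, hF, ⟨x, hxF⟩, hFC⟩
  choose! φ hφ𝒮' hφne hφsub using hsub
  refine ⟨φ, hφ𝒮', fun B hB C hC hBC => ?_, hφsub⟩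
  obtain ⟨x, hx⟩ := hφne B hB
  exact hdisj.elim_set hB hC x (hφsub B hB hx) (hφsub C hC (hBC ▸ hx))

theorem card_le_card_of_refines (hne : ∀ B ∈ 𝒮, B.Nonempty)
    (hdisj : (𝒮 : Set (Set α)).PairwiseDisjoint id)
    (hcover : (⋃ B ∈ 𝒮, B) ⊆ ⋃ F ∈ 𝒮', F)
    (href : ∀ F ∈ 𝒮', F.Nonempty → ∃ B ∈ 𝒮, F ⊆ B) :
    #𝒮 ≤ #𝒮' :=
  let ⟨φ, hmaps, hinj, _⟩ := exists_injOn_subset_of_refines hne hdisj hcover href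
  card_le_card_of_injOn φ hmaps hinj

theorem eq_of_refines_of_card_le (hne : ∀ B ∈ 𝒮, B.Nonempty)
    (hdisj : (𝒮 : Set (Set α)).PairwiseDisjoint id)
    (hcover : (⋃ B ∈ 𝒮, B) ⊆ ⋃ F ∈ 𝒮', F)
    (href : ∀ F ∈ 𝒮', F.Nonempty → ∃ B ∈ 𝒮, F ⊆ B) (hcard : #𝒮' ≤ #𝒮) :
    𝒮' = 𝒮 := by
  obtain ⟨φ, hmaps, hinj, hφsub⟩ := exists_injOn_subset_of_refines hne hdisj hcover href
  -- by counting, `φ` maps `𝒮` onto `𝒮'`, so every member of `𝒮'` is some `φ C ⊆ C`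
  have himage : 𝒮.image φ = 𝒮' := eq_of_subset_of_card_le
    (image_subset_iff.2 hmaps) (by rwa [card_image_of_injOn hinj])
  have hφeq : ∀ B ∈ 𝒮, φ B = B := by
    refine fun B hB => (hφsub B hB).antisymm fun x hx => ?_
    obtain ⟨F, hF, hxF⟩ := mem_iUnion₂.1 (hcover (mem_iUnion₂.2 ⟨B, hB, hx⟩))
    obtain ⟨C, hC, rfl⟩ := mem_image.1 (himage ▸ hF)
    obtain rfl : C = B := hdisj.elim_set hC hB x (hφsub C hC hxF) hx
    exact hxF
  rw [← himage, Finset.image_congr hφeq, Finset.image_id']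

end Refinement

theorem setDist_le_dist {X : Type*} [MetricSpace X] {A B : Set X} {a b : X} (ha : a ∈ A)
    (hb : b ∈ B) : setDist A B ≤ dist a b :=
  csInf_le ⟨0, by rintro _ ⟨x, -, y, -, rfl⟩; exact dist_nonneg⟩ (mem_image2_of_mem ha hb)

theorem IsClosed.diff_of_setDist_pos {X : Type*} [MetricSpace X] {E A : Set X} (hE : IsClosed E)
    (hA : 0 < setDist A (E \ A)) : IsClosed (E \ A) := by
  have hthick : E \ A = E \ thickening (setDist A (E \ A)) A := by
    refine subset_antisymm (fun y hy => ⟨hy.1, fun hyA => ?_⟩)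
      (sdiff_subset_sdiff_right (self_subset_thickening hA A))
    obtain ⟨a, ha, hya⟩ := mem_thickening_iff.1 hyA
    exact (setDist_le_dist ha hy).not_gt (dist_comm y a ▸ hya)
  rw [hthick]
  exact hE.sdiff isOpen_thickening

section ConvexHull

variable {B X Y : Set ℝ}

theorem subset_CH (hb : BddBelow B) (ha : BddAbove B) : B ⊆ CH B :=
  fun _ hx => ⟨csInf_le hb hx, le_csSup ha hx⟩

theorem uIcc_subset_CH (hb : BddBelow B) (ha : BddAbove B) {x y : ℝ} (hx : x ∈ B) (hy : y ∈ B) :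
    uIcc x y ⊆ CH B :=
  uIcc_subset_Icc (subset_CH hb ha hx) (subset_CH hb ha hy)

theorem sInf_le_sSup_of_CH_inter_nonempty (h : (CH X ∩ CH Y).Nonempty) : sInf X ≤ sSup Y :=
  let ⟨_, hpX, hpY⟩ := h
  hpX.1.trans hpY.2

end ConvexHull

section CutSet

variable {ι : Type*} [Fintype ι] {c : ι → ℝ}

variable (c) in
def cutSet (y : ℝ) : Finset ι := {i | c i < y}

@[simp]
theorem mem_cutSet {i : ι} {y : ℝ} : i ∈ cutSet c y ↔ c i < y := by
  simp [cutSet]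

theorem cutSet_mono : Monotone (cutSet c) :=
  fun _ _ hxy _ hi => mem_cutSet.2 ((mem_cutSet.1 hi).trans_le hxy)

theorem cutSet_eq_of_forall_notMem_uIcc {x y : ℝ} (h : ∀ i, c i ∉ uIcc x y) :
    cutSet c x = cutSet c y := by
  ext i
  have hi := h i
  rw [mem_uIcc] at hi
  simp only [mem_cutSet]
  grind

theorem isClosed_inter_setOf_cutSet_eq {K : Set ℝ} (hK : IsClosed K)
    (hKc : ∀ y ∈ K, ∀ i, y ≠ c i) (s : Finset ι) : IsClosed (K ∩ {y | cutSet c y = s}) := by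
  classical
  have hK_eq : K ∩ {y | cutSet c y = s} = K ∩ ⋂ i, if i ∈ s then Ici (c i) else Iic (c i) := by
    ext y
    simp only [mem_inter_iff, mem_ofPred_eq, mem_iInter, Finset.ext_iff, mem_cutSet]
    refine and_congr_right fun hy => forall_congr' fun i => ?_
    -- away from the cut points, `c i < y` is the closed condition `c i ≤ y`
    split_ifs with hi
    · simpa [hi] using (hKc y hy i).symm.le_iff_lt.symm
    · simp [hi]
  rw [hK_eq]
  exact hK.inter (isClosed_iInter fun i => by split_ifs; exacts [isClosed_Ici, isClosed_Iic])

end CutSet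

theorem GoodFam.pairwiseDisjoint {E : Set ℝ} {k : ℕ} {A : Fin k → Set ℝ} {𝒮 : Finset (Set ℝ)}
    (h𝒮 : GoodFam E A 𝒮) : (𝒮 : Set (Set ℝ)).PairwiseDisjoint id := by
  intro B hB C hC hBC
  have hBc := (h𝒮.1 B hB).1
  have hCc := (h𝒮.1 C hC).1
  exact (disjoint_iff_inter_eq_empty.2 (h𝒮.2.2.1 B hB C hC hBC)).mono
    (subset_CH hBc.bddBelow hBc.bddAbove) (subset_CH hCc.bddBelow hCc.bddAbove)

section SimpleDecomposition

variable {E : Set ℝ} {k : ℕ} {A : Fin k → Set ℝ} {s s' : Finset (Fin k)}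

variable (E A) in
def simplePiece (s : Finset (Fin k)) : Set ℝ :=
  {y ∈ E \ ⋃ i, A i | cutSet (fun i => sSup (A i)) y = s}

variable (E A) in
open Classical in
def simpleDecomp : Finset (Set ℝ) :=
  Finset.univ.image A ∪ (Finset.univ.image (simplePiece E A)).filter Set.Nonempty

theorem mem_simpleDecomp {B : Set ℝ} :
    B ∈ simpleDecomp E A ↔ (∃ i, A i = B) ∨ (∃ s, simplePiece E A s = B) ∧ B.Nonempty := by
  simp [simpleDecomp]

theorem notMem_CH_of_mem_diff (hCH : ∀ i, CH (A i) ∩ E = A i) {y : ℝ}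
    (hy : y ∈ E \ ⋃ i, A i) (i : Fin k) : y ∉ CH (A i) :=
  fun hyA => hy.2 (mem_iUnion.2 ⟨i, hCH i ▸ ⟨hyA, hy.1⟩⟩)

theorem isCompact_simplePiece (hE : IsCompact E) (hAc : ∀ i, IsCompact (A i))
    (hAne : ∀ i, (A i).Nonempty) (hsep : ∀ i, 0 < setDist (A i) (E \ A i)) (s : Finset (Fin k)) :
    IsCompact (simplePiece E A s) := by
  have hdiff : E \ ⋃ i, A i = E ∩ ⋂ i, E \ A i := by
    ext y
    simp +contextual
  have hclosed : IsClosed (E \ ⋃ i, A i) := hdiff ▸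
    hE.isClosed.inter (isClosed_iInter fun i => hE.isClosed.diff_of_setDist_pos (hsep i))
  refine hE.of_isClosed_subset (isClosed_inter_setOf_cutSet_eq hclosed ?_ s) fun y hy => hy.1.1
  rintro y hy i rfl
  exact hy.2 (mem_iUnion.2 ⟨i, (hAc i).sSup_mem (hAne i)⟩)

theorem CH_simplePiece_inter_CH_eq_empty (hE : IsCompact E) (hAc : ∀ i, IsCompact (A i))
    (hAne : ∀ i, (A i).Nonempty) (hsep : ∀ i, 0 < setDist (A i) (E \ A i))
    (hCH : ∀ i, CH (A i) ∩ E = A i) (hs : (simplePiece E A s).Nonempty) (i : Fin k) :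
    CH (simplePiece E A s) ∩ CH (A i) = ∅ := by
  set P := simplePiece E A s
  rw [← not_nonempty_iff_eq_empty]
  intro hPA
  have hP := isCompact_simplePiece hE hAc hAne hsep s
  have hinf : sInf P ∈ P := hP.sInf_mem hs
  have hsup : sSup P ∈ P := hP.sSup_mem hs
  -- the right end of `A i` separates the two ends of the piece
  have hleft : sInf P ≤ sSup (A i) := sInf_le_sSup_of_CH_inter_nonempty hPA
  have hright : sSup (A i) < sSup P := by
    by_contra! h
    exact notMem_CH_of_mem_diff hCH hsup.1 i
      ⟨sInf_le_sSup_of_CH_inter_nonempty (inter_comm _ _ ▸ hPA), h⟩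
  have hi : i ∈ cutSet (fun i => sSup (A i)) (sSup P) := mem_cutSet.2 hright
  rw [hsup.2, ← hinf.2, mem_cutSet] at hi
  exact hi.not_ge hleft

theorem CH_simplePiece_inter_CH_simplePiece (hE : IsCompact E) (hAc : ∀ i, IsCompact (A i))
    (hAne : ∀ i, (A i).Nonempty) (hsep : ∀ i, 0 < setDist (A i) (E \ A i))
    (hs : (simplePiece E A s).Nonempty) (hs' : (simplePiece E A s').Nonempty) (hss' : s ≠ s') :
    CH (simplePiece E A s) ∩ CH (simplePiece E A s') = ∅ := by
  rw [← not_nonempty_iff_eq_empty]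
  intro hPP
  have hP := isCompact_simplePiece hE hAc hAne hsep s
  have hP' := isCompact_simplePiece hE hAc hAne hsep s'
  refine hss' (subset_antisymm ?_ ?_)
  · rw [← (hP.sInf_mem hs).2, ← (hP'.sSup_mem hs').2]
    exact cutSet_mono (sInf_le_sSup_of_CH_inter_nonempty hPP)
  · rw [← (hP'.sInf_mem hs').2, ← (hP.sSup_mem hs).2]
    exact cutSet_mono (sInf_le_sSup_of_CH_inter_nonempty (inter_comm _ _ ▸ hPP))

theorem goodFam_simpleDecomp (hE : IsCompact E) (hAc : ∀ i, IsCompact (A i))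
    (hAne : ∀ i, (A i).Nonempty) (hAsub : ∀ i, A i ⊆ E)
    (hsep : ∀ i, 0 < setDist (A i) (E \ A i)) (hCH : ∀ i, CH (A i) ∩ E = A i)
    (hdisj : ∀ i j, i ≠ j → CH (A i) ∩ CH (A j) = ∅) :
    GoodFam E A (simpleDecomp E A) := by
  have hsubE : ∀ B ∈ simpleDecomp E A, B ⊆ E := by
    intro B hB
    rcases mem_simpleDecomp.1 hB with ⟨i, rfl⟩ | ⟨⟨s, rfl⟩, -⟩
    exacts [hAsub i, fun y hy => hy.1.1]
  refine ⟨fun B hB => ⟨?_, hsubE B hB⟩, subset_antisymm (iUnion₂_subset hsubE) ?_, ?_,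
    fun i => mem_simpleDecomp.2 (.inl ⟨i, rfl⟩)⟩
  · rcases mem_simpleDecomp.1 hB with ⟨i, rfl⟩ | ⟨⟨s, rfl⟩, -⟩
    exacts [hAc i, isCompact_simplePiece hE hAc hAne hsep s]
  · intro y hy
    by_cases hyA : ∃ i, y ∈ A i
    · obtain ⟨i, hyA⟩ := hyA
      exact mem_iUnion₂.2 ⟨A i, mem_simpleDecomp.2 (.inl ⟨i, rfl⟩), hyA⟩
    · have hy' : y ∈ simplePiece E A (cutSet (fun i => sSup (A i)) y) :=
        ⟨⟨hy, fun h => hyA (mem_iUnion.1 h)⟩, rfl⟩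
      exact mem_iUnion₂.2 ⟨_, mem_simpleDecomp.2 (.inr ⟨⟨_, rfl⟩, y, hy'⟩), hy'⟩
  · intro B hB C hC hBC
    rcases mem_simpleDecomp.1 hB with ⟨i, rfl⟩ | ⟨⟨s, rfl⟩, hs⟩ <;>
      rcases mem_simpleDecomp.1 hC with ⟨j, rfl⟩ | ⟨⟨s', rfl⟩, hs'⟩
    · exact hdisj i j fun h => hBC (congrArg A h)
    · rw [inter_comm]
      exact CH_simplePiece_inter_CH_eq_empty hE hAc hAne hsep hCH hs' i
    · exact CH_simplePiece_inter_CH_eq_empty hE hAc hAne hsep hCH hs j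
    · exact CH_simplePiece_inter_CH_simplePiece hE hAc hAne hsep hs hs' fun h => hBC (h ▸ rfl)

theorem nonempty_of_mem_simpleDecomp (hAne : ∀ i, (A i).Nonempty) {B : Set ℝ}
    (hB : B ∈ simpleDecomp E A) : B.Nonempty := by
  rcases mem_simpleDecomp.1 hB with ⟨i, rfl⟩ | ⟨-, hB⟩
  exacts [hAne i, hB]

theorem subset_simplePiece {B : Set ℝ} (hBU : B ⊆ E \ ⋃ i, A i) (hBb : BddBelow B)
    (hBa : BddAbove B) (hcut : ∀ i, sSup (A i) ∉ CH B) {x : ℝ} (hx : x ∈ B) :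
    B ⊆ simplePiece E A (cutSet (fun i => sSup (A i)) x) :=
  fun _ hy => ⟨hBU hy, cutSet_eq_of_forall_notMem_uIcc fun i hi =>
    hcut i (uIcc_subset_CH hBb hBa hy hx hi)⟩

theorem exists_simpleDecomp_superset_of_goodFam (hAc : ∀ i, IsCompact (A i))
    (hAne : ∀ i, (A i).Nonempty) {𝒮 : Finset (Set ℝ)} (h𝒮 : GoodFam E A 𝒮) :
    ∀ F ∈ 𝒮, F.Nonempty → ∃ B ∈ simpleDecomp E A, F ⊆ B := by
  rintro F hF ⟨x, hx⟩
  by_cases hFA : ∃ i, F = A i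
  · obtain ⟨i, rfl⟩ := hFA
    exact ⟨A i, mem_simpleDecomp.2 (.inl ⟨i, rfl⟩), subset_rfl⟩
  push Not at hFA
  obtain ⟨hFc, hFE⟩ := h𝒮.1 F hF
  have hFU : F ⊆ E \ ⋃ i, A i := fun y hy => ⟨hFE hy, fun hyA => by
    obtain ⟨i, hyA⟩ := mem_iUnion.1 hyA
    exact h𝒮.pairwiseDisjoint.elim_set hF (h𝒮.2.2.2 i) y hy hyA |> hFA i⟩
  have hcut : ∀ i, sSup (A i) ∉ CH F := fun i hi =>
    (h𝒮.2.2.1 F hF (A i) (h𝒮.2.2.2 i) (hFA i)).subset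
      ⟨hi, subset_CH (hAc i).bddBelow (hAc i).bddAbove ((hAc i).sSup_mem (hAne i))⟩
  exact ⟨_, mem_simpleDecomp.2 (.inr ⟨⟨_, rfl⟩, x, hFU hx, rfl⟩),
    subset_simplePiece hFU hFc.bddBelow hFc.bddAbove hcut hx⟩

theorem existsUnique_mem_simpleDecomp_superset (hE : IsCompact E) (hAc : ∀ i, IsCompact (A i))
    (hAne : ∀ i, (A i).Nonempty) (hAsub : ∀ i, A i ⊆ E)
    (hsep : ∀ i, 0 < setDist (A i) (E \ A i)) (hCH : ∀ i, CH (A i) ∩ E = A i)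
    (hdisj : ∀ i j, i ≠ j → CH (A i) ∩ CH (A j) = ∅) {B : Set ℝ} (hB : B.Nonempty) (hBE : B ⊆ E)
    (hBA : CH B ∩ ⋃ i, A i = ∅) : ∃! F, F ∈ simpleDecomp E A ∧ B ⊆ F := by
  obtain ⟨x, hx⟩ := hB
  have hBb : BddBelow B := hE.bddBelow.mono hBE
  have hBa : BddAbove B := hE.bddAbove.mono hBE
  have hnotA : ∀ y ∈ CH B, y ∉ ⋃ i, A i := fun y hy hyA => hBA.subset ⟨hy, hyA⟩
  have hBU : B ⊆ E \ ⋃ i, A i := fun y hy => ⟨hBE hy, hnotA y (subset_CH hBb hBa hy)⟩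
  have hcut : ∀ i, sSup (A i) ∉ CH B := fun i hi =>
    hnotA _ hi (mem_iUnion.2 ⟨i, (hAc i).sSup_mem (hAne i)⟩)
  have hsub := subset_simplePiece hBU hBb hBa hcut hx
  refine ⟨_, ⟨mem_simpleDecomp.2 (.inr ⟨⟨_, rfl⟩, x, hsub hx⟩), hsub⟩, fun F ⟨hF, hBF⟩ => ?_⟩
  exact (goodFam_simpleDecomp hE hAc hAne hAsub hsep hCH hdisj).pairwiseDisjoint.elim_set hF
    (mem_simpleDecomp.2 (.inr ⟨⟨_, rfl⟩, x, hsub hx⟩)) x (hBF hx) (hsub hx)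

end SimpleDecomposition

/-- existence and uniqueness of the simple decomposition of a compact
set `E ⊆ ℝ` by a family of `E`-separate sets with disjoint convex hulls, together
with the containing property. -/
theorem simple_decomposition_exists_unique (E : Set ℝ) (hE : IsCompact E)
    {k : ℕ} (A : Fin k → Set ℝ)
    (hAc : ∀ i, IsCompact (A i)) (hAne : ∀ i, (A i).Nonempty)
    (hAsub : ∀ i, A i ⊆ E)
    (hsep : ∀ i, 0 < setDist (A i) (E \ A i))
    (hCH : ∀ i, CH (A i) ∩ E = A i)
    (hdisj : ∀ i j, i ≠ j → CH (A i) ∩ CH (A j) = ∅) :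
    ∃ 𝒮 : Finset (Set ℝ),
      GoodFam E A 𝒮 ∧
      (∀ 𝒮' : Finset (Set ℝ), GoodFam E A 𝒮' → 𝒮.card ≤ 𝒮'.card) ∧
      (∀ 𝒮' : Finset (Set ℝ), GoodFam E A 𝒮' → 𝒮'.card ≤ 𝒮.card → 𝒮' = 𝒮) ∧
      (∀ B : Set ℝ, B.Nonempty → B ⊆ E → (CH B ∩ ⋃ i, A i) = ∅ →
        ∃! F, F ∈ 𝒮 ∧ B ⊆ F) := by
  have hgood := goodFam_simpleDecomp hE hAc hAne hAsub hsep hCH hdisj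
  have hne : ∀ B ∈ simpleDecomp E A, B.Nonempty := fun _ => nonempty_of_mem_simpleDecomp hAne
  have hcover : ∀ 𝒮', GoodFam E A 𝒮' → (⋃ B ∈ simpleDecomp E A, B) ⊆ ⋃ F ∈ 𝒮', F :=
    fun 𝒮' h𝒮' => (hgood.2.1.trans h𝒮'.2.1.symm).subset
  refine ⟨simpleDecomp E A, hgood, fun 𝒮' h𝒮' => ?_, fun 𝒮' h𝒮' hcard => ?_,
    fun B hB hBE hBA => existsUnique_mem_simpleDecomp_superset hE hAc hAne hAsub hsep hCH hdisj
      hB hBE hBA⟩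
  · exact card_le_card_of_refines hne hgood.pairwiseDisjoint (hcover 𝒮' h𝒮')
      (exists_simpleDecomp_superset_of_goodFam hAc hAne h𝒮')
  · exact eq_of_refines_of_card_le hne hgood.pairwiseDisjoint (hcover 𝒮' h𝒮')
      (exists_simpleDecomp_superset_of_goodFam hAc hAne h𝒮') hcard
end
end
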